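/- arXiv:1410.0458 — 9 statements merged into one kernel-verified Lean document; each statement's English description precedes it below -/
import Mathlib

section
/- Let C ⊆ R^N be a nonempty closed convex cone and C* its polar cone. Then w(C ∩ B₂^N)² + w(C* ∩ B₂^N)² ≤ N, where w(S) = E sup_{x∈S} ⟨Y, x⟩ is the Gaussian width with Y a standard Gaussian vector in R^N and B₂^N the unit Euclidean ball. -/
open MeasureTheory ProbabilityTheory

/-- The Gaussian width of a set `S ⊆ ℝ^N`: `w(S) = E sup_{x ∈ S} ⟨Y, x⟩` where `Y` is a
standard Gaussian vector (i.i.d. `N(0,1)` coordinates). -/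
noncomputable def gaussianWidth {N : ℕ} (S : Set (EuclideanSpace ℝ (Fin N))) : ℝ :=
  ∫ y : Fin N → ℝ,
    sSup ((fun x : EuclideanSpace ℝ (Fin N) => ∑ i, y i * x i) '' S)
    ∂(Measure.pi fun _ : Fin N => gaussianReal 0 1)

/-!
By the Moreau decomposition, every `z` splits as `z = p + q` with `p ∈ C`, `q ∈ C°` and
`⟪p, q⟫ = 0`. For `x ∈ C ∩ B` we have `⟪z, x⟫ ≤ ⟪p, x⟫ ≤ ‖p‖`, and for `x ∈ C° ∩ B` likewise
`⟪z, x⟫ ≤ ‖q‖`, so the squares of the two suprema add up to at most `‖p‖² + ‖q‖² = ‖z‖²`.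
Taking expectations, Jensen's inequality `(𝔼 f)² ≤ 𝔼 f²` and `𝔼 ‖Y‖² = N` give the bound.
-/

open Filter Metric Module Set Topology
open scoped NNReal RealInnerProductSpace

lemma zero_mem_of_isClosed_of_smul_mem {E : Type*} [AddCommMonoid E] [Module ℝ E]
    [TopologicalSpace E] [ContinuousSMul ℝ E] {C : Set E} (hne : C.Nonempty) (hcl : IsClosed C)
    (hcone : ∀ c : ℝ, 0 < c → ∀ x ∈ C, c • x ∈ C) : (0 : E) ∈ C := by
  obtain ⟨x, hx⟩ := hne
  have hlim : Tendsto (fun c : ℝ => c • x) (𝓝[>] 0) (𝓝 0) := by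
    simpa using (tendsto_nhdsWithin_of_tendsto_nhds (tendsto_id.smul_const x) :
      Tendsto (fun c : ℝ => c • x) (𝓝[>] 0) (𝓝 ((0 : ℝ) • x)))
  exact hcl.mem_of_tendsto hlim (eventually_nhdsWithin_of_forall fun c hc => hcone c hc x hx)

section InnerProductSpace

variable {E : Type*} [NormedAddCommGroup E] [InnerProductSpace ℝ E]

/-- `sSup` of an empty or unbounded image is the junk value `0`, so the lemmas below assume
`S` nonempty and inside the unit ball. -/
noncomputable def supportFunction (S : Set E) (z : E) : ℝ :=
  sSup ((fun x => ⟪z, x⟫) '' S)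

variable {S : Set E}

lemma inner_le_norm_of_mem_closedBall_one {x : E} (hx : x ∈ closedBall (0 : E) 1) (z : E) :
    ⟪z, x⟫ ≤ ‖z‖ :=
  (real_inner_le_norm z x).trans
    (mul_le_of_le_one_right (norm_nonneg z) (mem_closedBall_zero_iff.1 hx))

lemma le_supportFunction (hS : S ⊆ closedBall 0 1) {x : E} (hx : x ∈ S) (z : E) :
    ⟪z, x⟫ ≤ supportFunction S z :=
  le_csSup ⟨‖z‖, forall_mem_image.2 fun _ hy => inner_le_norm_of_mem_closedBall_one (hS hy) z⟩
    (mem_image_of_mem _ hx)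

lemma supportFunction_le (hne : S.Nonempty) {z : E} {b : ℝ} (h : ∀ x ∈ S, ⟪z, x⟫ ≤ b) :
    supportFunction S z ≤ b :=
  csSup_le (hne.image _) (forall_mem_image.2 h)

lemma supportFunction_nonneg (hS : S ⊆ closedBall 0 1) (h0 : (0 : E) ∈ S) (z : E) :
    0 ≤ supportFunction S z := by
  simpa using le_supportFunction hS h0 z

lemma supportFunction_le_norm_of_inner_le (hS : S ⊆ closedBall 0 1) (hne : S.Nonempty) {z w : E}
    (h : ∀ x ∈ S, ⟪z, x⟫ ≤ ⟪w, x⟫) : supportFunction S z ≤ ‖w‖ :=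
  supportFunction_le hne fun x hx => (h x hx).trans (inner_le_norm_of_mem_closedBall_one (hS hx) w)

lemma lipschitzWith_supportFunction (hS : S ⊆ closedBall 0 1) (hne : S.Nonempty) :
    LipschitzWith 1 (supportFunction S) :=
  LipschitzWith.of_le_add fun z w => supportFunction_le hne fun x hx =>
    calc ⟪z, x⟫ = ⟪w, x⟫ + ⟪z - w, x⟫ := by rw [← inner_add_left, add_sub_cancel]
      _ ≤ supportFunction S w + dist z w := by
        rw [dist_eq_norm]
        exact add_le_add (le_supportFunction hS hx w)
          (inner_le_norm_of_mem_closedBall_one (hS hx) _)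

def polarCone (C : Set E) : Set E := {x | ∀ y ∈ C, ⟪x, y⟫ ≤ 0}

lemma zero_mem_polarCone (C : Set E) : (0 : E) ∈ polarCone C := fun y _ => by simp

variable {C : Set E}

theorem exists_moreau_decomposition [CompleteSpace E] (hcl : IsClosed C) (hconv : Convex ℝ C)
    (h0 : (0 : E) ∈ C) (hcone : ∀ c : ℝ, 0 < c → ∀ x ∈ C, c • x ∈ C) (z : E) :
    ∃ p ∈ C, ⟪z - p, p⟫ = 0 ∧ z - p ∈ polarCone C := by
  obtain ⟨p, hp, hmin⟩ :=
    exists_norm_eq_iInf_of_complete_convex ⟨0, h0⟩ hcl.isComplete hconv z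
  have hvar := (norm_eq_iInf_iff_real_inner_le_zero hconv hp).1 hmin
  -- testing the variational inequality of the projection `p` at `0` and at `2 • p`
  have horth : ⟪z - p, p⟫ = 0 := by
    have h2p := hvar ((2 : ℝ) • p) (hcone 2 two_pos p hp)
    have h0p := hvar 0 h0
    rw [two_smul, add_sub_cancel_right] at h2p
    rw [zero_sub, inner_neg_right] at h0p
    linarith
  refine ⟨p, hp, horth, fun x hx => ?_⟩
  simpa [inner_sub_right, horth] using hvar x hx

theorem supportFunction_cone_sq_add_polar_sq_le [CompleteSpace E] (hcl : IsClosed C)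
    (hconv : Convex ℝ C) (h0 : (0 : E) ∈ C) (hcone : ∀ c : ℝ, 0 < c → ∀ x ∈ C, c • x ∈ C)
    (z : E) :
    supportFunction (C ∩ closedBall 0 1) z ^ 2 +
      supportFunction (polarCone C ∩ closedBall 0 1) z ^ 2 ≤ ‖z‖ ^ 2 := by
  obtain ⟨p, hp, horth, hq⟩ := exists_moreau_decomposition hcl hconv h0 hcone z
  have hball : (0 : E) ∈ closedBall (0 : E) 1 := mem_closedBall_self zero_le_one
  have hsupC : supportFunction (C ∩ closedBall 0 1) z ≤ ‖p‖ :=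
    supportFunction_le_norm_of_inner_le inter_subset_right ⟨0, h0, hball⟩ fun x hx => by
      have := hq x hx.1
      rw [inner_sub_left] at this
      linarith
  have hsupPolar : supportFunction (polarCone C ∩ closedBall 0 1) z ≤ ‖z - p‖ :=
    supportFunction_le_norm_of_inner_le inter_subset_right ⟨0, zero_mem_polarCone C, hball⟩
      fun x hx => by
        have := hx.1 p hp
        rw [real_inner_comm] at this
        rw [inner_sub_left]
        linarith
  calc _ ≤ ‖p‖ ^ 2 + ‖z - p‖ ^ 2 := by
        gcongr
        · exact supportFunction_nonneg inter_subset_right ⟨h0, hball⟩ z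
        · exact supportFunction_nonneg inter_subset_right ⟨zero_mem_polarCone C, hball⟩ z
    _ = ‖z‖ ^ 2 := by
      rw [show ‖z‖ ^ 2 = ‖p + (z - p)‖ ^ 2 by rw [add_sub_cancel], norm_add_sq_real,
        real_inner_comm, horth]
      ring

end InnerProductSpace

section Probability

variable {Ω : Type*} [MeasurableSpace Ω] {μ : Measure Ω} [IsProbabilityMeasure μ]

lemma sq_integral_le_integral_sq {f : Ω → ℝ} (hf : MemLp f 2 μ) :
    (∫ ω, f ω ∂μ) ^ 2 ≤ ∫ ω, f ω ^ 2 ∂μ := by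
  have := variance_nonneg f μ
  rw [variance_eq_sub hf] at this
  simpa using this

lemma sq_integral_add_sq_integral_le {f g h : Ω → ℝ} (hf : AEStronglyMeasurable f μ)
    (hg : AEStronglyMeasurable g μ) (hh : Integrable h μ) (hfgh : ∀ ω, f ω ^ 2 + g ω ^ 2 ≤ h ω) :
    (∫ ω, f ω ∂μ) ^ 2 + (∫ ω, g ω ∂μ) ^ 2 ≤ ∫ ω, h ω ∂μ := by
  have hf2 : Integrable (fun ω => f ω ^ 2) μ :=
    hh.mono' (hf.pow 2) (Eventually.of_forall fun ω => by
      rw [norm_pow, Real.norm_eq_abs, sq_abs]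
      linarith [hfgh ω, sq_nonneg (g ω)])
  have hg2 : Integrable (fun ω => g ω ^ 2) μ :=
    hh.mono' (hg.pow 2) (Eventually.of_forall fun ω => by
      rw [norm_pow, Real.norm_eq_abs, sq_abs]
      linarith [hfgh ω, sq_nonneg (f ω)])
  calc _ ≤ ∫ ω, f ω ^ 2 ∂μ + ∫ ω, g ω ^ 2 ∂μ :=
        add_le_add (sq_integral_le_integral_sq ((memLp_two_iff_integrable_sq hf).2 hf2))
          (sq_integral_le_integral_sq ((memLp_two_iff_integrable_sq hg).2 hg2))
    _ = ∫ ω, f ω ^ 2 + g ω ^ 2 ∂μ := (integral_add hf2 hg2).symm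
    _ ≤ ∫ ω, h ω ∂μ := integral_mono (hf2.add hg2) hh hfgh

end Probability

lemma integral_sq_gaussianReal (m : ℝ) (v : ℝ≥0) : ∫ x, x ^ 2 ∂gaussianReal m v = m ^ 2 + v := by
  have := variance_eq_sub (memLp_id_gaussianReal' (μ := m) (v := v) 2 (by norm_num))
  rw [variance_id_gaussianReal] at this
  simp only [Pi.pow_apply, id_eq, integral_id_gaussianReal] at this
  linarith

lemma integral_norm_sq_pi_gaussianReal (ι : Type*) [Fintype ι] :
    ∫ y, ‖WithLp.toLp 2 y‖ ^ 2 ∂(Measure.pi fun _ : ι => gaussianReal 0 1) = Fintype.card ι := by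
  have hsq : Integrable (fun x : ℝ => x ^ 2) (gaussianReal 0 1) :=
    (memLp_id_gaussianReal' 2 (by norm_num)).integrable_sq
  have heval (i : ι) := measurePreserving_eval (fun _ : ι => gaussianReal 0 1) i
  have hint (i : ι) :
      Integrable (fun y : ι → ℝ => y i ^ 2) (Measure.pi fun _ => gaussianReal 0 1) :=
    Integrable.comp_measurable (g := fun x : ℝ => x ^ 2) (by rwa [(heval i).map_eq])
      (heval i).measurable
  have hcoord (i : ι) : ∫ y, y i ^ 2 ∂(Measure.pi fun _ : ι => gaussianReal 0 1) = 1 := by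
    have h := integral_map (heval i).measurable.aemeasurable (f := fun x : ℝ => x ^ 2)
      (by rw [(heval i).map_eq]; exact hsq.aestronglyMeasurable)
    rw [(heval i).map_eq, integral_sq_gaussianReal] at h
    simpa using h.symm
  simp_rw [EuclideanSpace.real_norm_sq_eq]
  rw [integral_finsetSum _ fun i _ => hint i]
  simp [hcoord]

lemma integral_norm_sq_stdGaussian (E : Type*) [NormedAddCommGroup E] [InnerProductSpace ℝ E]
    [FiniteDimensional ℝ E] [MeasurableSpace E] [BorelSpace E] :
    ∫ x, ‖x‖ ^ 2 ∂stdGaussian E = finrank ℝ E := by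
  let e := (stdOrthonormalBasis ℝ E).repr
  calc ∫ x, ‖x‖ ^ 2 ∂stdGaussian E = ∫ x, ‖e x‖ ^ 2 ∂stdGaussian E := by simp
    _ = ∫ y, ‖y‖ ^ 2 ∂(stdGaussian E).map e :=
      (integral_map e.continuous.aemeasurable (continuous_norm.pow 2).aestronglyMeasurable).symm
    _ = ∫ y, ‖y‖ ^ 2 ∂(Measure.pi fun _ => gaussianReal 0 1).map (WithLp.toLp 2) := by
      rw [stdGaussian_map, map_pi_eq_stdGaussian (ι := Fin (finrank ℝ E))]
    _ = finrank ℝ E := by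
      rw [← MeasurableEquiv.coe_toLp, integral_map_equiv, MeasurableEquiv.coe_toLp,
        integral_norm_sq_pi_gaussianReal, Fintype.card_fin]

theorem integral_supportFunction_cone_sq_add_polar_sq_le {E : Type*} [NormedAddCommGroup E]
    [InnerProductSpace ℝ E] [FiniteDimensional ℝ E] [MeasurableSpace E] [BorelSpace E]
    {C : Set E} (hcl : IsClosed C) (hconv : Convex ℝ C) (h0 : (0 : E) ∈ C)
    (hcone : ∀ c : ℝ, 0 < c → ∀ x ∈ C, c • x ∈ C) :
    (∫ z, supportFunction (C ∩ closedBall 0 1) z ∂stdGaussian E) ^ 2 +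
      (∫ z, supportFunction (polarCone C ∩ closedBall 0 1) z ∂stdGaussian E) ^ 2
      ≤ finrank ℝ E := by
  have hball : (0 : E) ∈ closedBall (0 : E) 1 := mem_closedBall_self zero_le_one
  have hC := lipschitzWith_supportFunction inter_subset_right ⟨0, h0, hball⟩
  have hpolar := lipschitzWith_supportFunction inter_subset_right ⟨0, zero_mem_polarCone C, hball⟩
  rw [← integral_norm_sq_stdGaussian]
  exact sq_integral_add_sq_integral_le hC.continuous.aestronglyMeasurable
    hpolar.continuous.aestronglyMeasurable IsGaussian.memLp_two_id.integrable_norm_pow'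
    (supportFunction_cone_sq_add_polar_sq_le hcl hconv h0 hcone)

lemma gaussianWidth_eq_integral_supportFunction {N : ℕ} (S : Set (EuclideanSpace ℝ (Fin N))) :
    gaussianWidth S = ∫ z, supportFunction S z ∂stdGaussian (EuclideanSpace ℝ (Fin N)) := by
  rw [← map_pi_eq_stdGaussian, ← MeasurableEquiv.coe_toLp, integral_map_equiv]
  simp [gaussianWidth, supportFunction, PiLp.inner_apply, mul_comm]

theorem gaussianWidth_cone_sq_add_polar_sq_le (N : ℕ)
    (C : Set (EuclideanSpace ℝ (Fin N))) (hne : C.Nonempty) (hcl : IsClosed C)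
    (hconv : Convex ℝ C) (hcone : ∀ (c : ℝ), 0 < c → ∀ x ∈ C, c • x ∈ C) :
    gaussianWidth (C ∩ Metric.closedBall 0 1) ^ 2 +
      gaussianWidth ({x : EuclideanSpace ℝ (Fin N) |
          ∀ y ∈ C, @inner ℝ (EuclideanSpace ℝ (Fin N)) _ x y ≤ 0} ∩
        Metric.closedBall 0 1) ^ 2 ≤ (N : ℝ) := by
  have h0 := zero_mem_of_isClosed_of_smul_mem hne hcl hcone
  simpa [gaussianWidth_eq_integral_supportFunction, polarCone] using
    integral_supportFunction_cone_sq_add_polar_sq_le hcl hconv h0 hcone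
end

section
/- Let C ⊆ R^N be a nonempty closed convex cone and Y a standard Gaussian vector in R^N. Then w(C ∩ B₂^N) ≤ E ‖P_C Y‖, where P_C denotes the metric projection onto C and w denotes Gaussian width. -/
/-!
For `y` and `x ∈ C` with `‖x‖ ≤ 1`, split `⟪y, x⟫ = ⟪y - P y, x⟫ + ⟪P y, x⟫`. Since `C` is a
convex cone, `P y + x ∈ C`, so the variational inequality of the projection makes the first
term nonpositive, while the second is at most `‖P y‖` by Cauchy–Schwarz. Hence the supremum defining
the width is bounded by `‖P y‖` pointwise, and it is nonnegative because `0 = P 0 ∈ C`.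
Integrating is legitimate because `P` is 1-Lipschitz, so `‖P y‖ ≤ ‖y‖`.
-/

open MeasureTheory ProbabilityTheory

open scoped RealInnerProductSpace

def IsMetricProjection {F : Type*} [NormedAddCommGroup F] (K : Set F) (P : F → F) : Prop :=
  ∀ x, P x ∈ K ∧ ∀ z ∈ K, ‖x - P x‖ ≤ ‖x - z‖

lemma Convex.add_mem_of_smul_mem {F : Type*} [AddCommGroup F] [Module ℝ F] {K : Set F}
    (hconv : Convex ℝ K) (hcone : ∀ c : ℝ, 0 < c → ∀ x ∈ K, c • x ∈ K) {a b : F}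
    (ha : a ∈ K) (hb : b ∈ K) : a + b ∈ K := by
  have hmid : (1 / 2 : ℝ) • a + (1 / 2 : ℝ) • b ∈ K :=
    hconv ha hb (by norm_num) (by norm_num) (by norm_num)
  simpa [smul_add, smul_smul] using hcone 2 two_pos _ hmid

namespace IsMetricProjection

variable {F : Type*} [NormedAddCommGroup F] [InnerProductSpace ℝ F] {K : Set F} {P : F → F}

lemma inner_sub_le_zero (hP : IsMetricProjection K P) (hconv : Convex ℝ K) (x : F) {z : F}
    (hz : z ∈ K) : ⟪x - P x, z - P x⟫ ≤ 0 := by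
  have : Nonempty K := ⟨⟨z, hz⟩⟩
  refine (norm_eq_iInf_iff_real_inner_le_zero hconv (hP x).1).mp ?_ z hz
  have hbdd : BddBelow (Set.range fun w : K => ‖x - w‖) :=
    ⟨0, by rintro _ ⟨w, rfl⟩; exact norm_nonneg _⟩
  exact le_antisymm (le_ciInf fun w => (hP x).2 w w.2) (ciInf_le hbdd ⟨P x, (hP x).1⟩)

lemma norm_sub_sq_le_inner (hP : IsMetricProjection K P) (hconv : Convex ℝ K) (u v : F) :
    ‖P u - P v‖ ^ 2 ≤ ⟪u - v, P u - P v⟫ := by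
  have hu := hP.inner_sub_le_zero hconv u (hP v).1
  have hv := hP.inner_sub_le_zero hconv v (hP u).1
  rw [← neg_sub (P u) (P v), inner_neg_right] at hu
  have hsplit : u - v = (u - P u) - (v - P v) + (P u - P v) := by abel
  rw [hsplit, inner_add_left, inner_sub_left, real_inner_self_eq_norm_sq]
  linarith

lemma lipschitzWith_one (hP : IsMetricProjection K P) (hconv : Convex ℝ K) :
    LipschitzWith 1 P := by
  refine LipschitzWith.of_dist_le_mul fun u v => ?_
  rw [NNReal.coe_one, one_mul, dist_eq_norm, dist_eq_norm]
  have hsq : ‖P u - P v‖ ^ 2 ≤ ‖u - v‖ * ‖P u - P v‖ :=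
    (hP.norm_sub_sq_le_inner hconv u v).trans (real_inner_le_norm _ _)
  nlinarith [norm_nonneg (P u - P v), norm_nonneg (u - v)]

-- `P 0` is no farther from `0` than `(1/2) • P 0 ∈ K`, which forces `P 0 = 0`.
lemma map_zero (hP : IsMetricProjection K P) (hcone : ∀ c : ℝ, 0 < c → ∀ x ∈ K, c • x ∈ K) :
    P 0 = 0 := by
  have h := (hP 0).2 _ (hcone (1 / 2) (by norm_num) _ (hP 0).1)
  rw [zero_sub, zero_sub, norm_neg, norm_neg, norm_smul, Real.norm_of_nonneg (by norm_num)] at h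
  exact norm_eq_zero.mp (by linarith [norm_nonneg (P 0)])

lemma norm_apply_le (hP : IsMetricProjection K P) (hconv : Convex ℝ K)
    (hcone : ∀ c : ℝ, 0 < c → ∀ x ∈ K, c • x ∈ K) (y : F) : ‖P y‖ ≤ ‖y‖ := by
  simpa [hP.map_zero hcone, dist_eq_norm] using (hP.lipschitzWith_one hconv).dist_le_mul y 0

lemma inner_le_norm_apply (hP : IsMetricProjection K P) (hconv : Convex ℝ K)
    (hcone : ∀ c : ℝ, 0 < c → ∀ x ∈ K, c • x ∈ K) (y : F) {x : F} (hx : x ∈ K)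
    (hx1 : ‖x‖ ≤ 1) : ⟪y, x⟫ ≤ ‖P y‖ := by
  have hnormal : ⟪y - P y, x⟫ ≤ 0 := by
    simpa using hP.inner_sub_le_zero hconv y (hconv.add_mem_of_smul_mem hcone (hP y).1 hx)
  have hcs : ⟪P y, x⟫ ≤ ‖P y‖ :=
    (real_inner_le_norm _ _).trans (mul_le_of_le_one_right (norm_nonneg _) hx1)
  calc ⟪y, x⟫ = ⟪y - P y, x⟫ + ⟪P y, x⟫ := by rw [← inner_add_left, sub_add_cancel]
    _ ≤ ‖P y‖ := by linarith

end IsMetricProjection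

lemma integrable_toLp_pi_gaussianReal {ι : Type*} [Fintype ι] (p : ENNReal) [Fact (1 ≤ p)]
    (m : ℝ) (v : NNReal) :
    Integrable (WithLp.toLp p) (Measure.pi fun _ : ι => gaussianReal m v) :=
  integrable_piLp_iff.mpr fun _ => integrable_eval ((memLp_id_gaussianReal 1).integrable le_rfl)

theorem gaussianWidth_cone_le_expected_norm_proj_general (N : ℕ)
    (C : Set (EuclideanSpace ℝ (Fin N)))
    (hconv : Convex ℝ C) (hcone : ∀ (c : ℝ), 0 < c → ∀ x ∈ C, c • x ∈ C)
    (P : EuclideanSpace ℝ (Fin N) → EuclideanSpace ℝ (Fin N))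
    (hP : ∀ x, P x ∈ C ∧ ∀ z ∈ C, ‖x - P x‖ ≤ ‖x - z‖) :
    gaussianWidth (C ∩ Metric.closedBall 0 1) ≤
      ∫ y : Fin N → ℝ, ‖P (WithLp.toLp 2 y)‖ ∂(Measure.pi fun _ : Fin N => gaussianReal 0 1) := by
  have hP : IsMetricProjection C P := hP
  have hsup_le : ∀ y : Fin N → ℝ, ∀ a ∈ (fun x : EuclideanSpace ℝ (Fin N) => ∑ i, y i * x i) ''
      (C ∩ Metric.closedBall 0 1), a ≤ ‖P (WithLp.toLp 2 y)‖ := by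
    rintro y _ ⟨x, ⟨hxC, hx1⟩, rfl⟩
    simpa [PiLp.inner_apply, mul_comm] using
      hP.inner_le_norm_apply hconv hcone (WithLp.toLp 2 y) hxC (mem_closedBall_zero_iff.mp hx1)
  have hzero : (0 : EuclideanSpace ℝ (Fin N)) ∈ C ∩ Metric.closedBall 0 1 :=
    ⟨hP.map_zero hcone ▸ (hP 0).1, Metric.mem_closedBall_self zero_le_one⟩
  have hint : Integrable (fun y : Fin N → ℝ => ‖P (WithLp.toLp 2 y)‖)
      (Measure.pi fun _ : Fin N => gaussianReal 0 1) := by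
    have hcont : Continuous fun y : Fin N → ℝ => ‖P (WithLp.toLp 2 y)‖ :=
      ((hP.lipschitzWith_one hconv).continuous.comp (PiLp.continuous_toLp 2 _)).norm
    refine (integrable_toLp_pi_gaussianReal 2 0 1).norm.mono hcont.aestronglyMeasurable
      (.of_forall fun y => ?_)
    simpa using hP.norm_apply_le hconv hcone _
  refine integral_mono_of_nonneg (.of_forall fun y => ?_) hint (.of_forall fun y => ?_)
  · exact le_csSup ⟨_, hsup_le y⟩ ⟨0, hzero, by simp⟩
  · exact Real.sSup_le (hsup_le y) (norm_nonneg _)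

theorem gaussianWidth_cone_le_expected_norm_proj (N : ℕ)
    (C : Set (EuclideanSpace ℝ (Fin N))) (hne : C.Nonempty) (hcl : IsClosed C)
    (hconv : Convex ℝ C) (hcone : ∀ (c : ℝ), 0 < c → ∀ x ∈ C, c • x ∈ C)
    (P : EuclideanSpace ℝ (Fin N) → EuclideanSpace ℝ (Fin N))
    (hP : ∀ x, P x ∈ C ∧ ∀ z ∈ C, ‖x - P x‖ ≤ ‖x - z‖) :
    gaussianWidth (C ∩ Metric.closedBall 0 1) ≤
      ∫ y : Fin N → ℝ, ‖P (WithLp.toLp 2 y)‖ ∂(Measure.pi fun _ : Fin N => gaussianReal 0 1) :=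
  gaussianWidth_cone_le_expected_norm_proj_general N C hconv hcone P hP
end

section
/- Let ξ be a random variable with E ξ = 0, E ξ² = 1, and suppose L > 0 satisfies ∫_{L²}^∞ P{ξ² ≥ t} dt ≤ 1/2. Then E|ξ| ≥ 1/(4L). -/
/-!
Splitting the layer-cake formula `E ξ² = ∫₀^∞ P{ξ² ≥ t} dt` at `L²` shows that
`E min(ξ², L²) = ∫₀^{L²} P{ξ² ≥ t} dt ≥ 1 - 1/2`. Since `min(x², L²) ≤ L |x|`, this gives
`L E|ξ| ≥ 1/2`, which is even twice the claimed bound.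
-/

open MeasureTheory Set

namespace MeasureTheory

variable {α : Type*} [MeasurableSpace α] {μ : Measure α} {f : α → ℝ}

theorem Integrable.integrableOn_meas_le (hf : Integrable f μ) (hf0 : 0 ≤ᵐ[μ] f) :
    IntegrableOn (fun t => μ.real {a | t ≤ f a}) (Ioi 0) := by
  have hanti : Antitone fun t => μ {a | t ≤ f a} :=
    fun _ _ hst => measure_mono fun _ ha => hst.trans ha
  refine integrable_toReal_of_lintegral_ne_top hanti.measurable.aemeasurable ?_
  rw [← lintegral_eq_lintegral_meas_le μ hf0 hf.aemeasurable]
  exact (hf.lintegral_lt_top).ne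

theorem Integrable.integral_min_add_setIntegral_Ioi_meas_le (hf : Integrable f μ)
    (hf0 : 0 ≤ᵐ[μ] f) {c : ℝ} (hc : 0 ≤ c) :
    ∫ a, min (f a) c ∂μ + ∫ t in Ioi c, μ.real {a | t ≤ f a} = ∫ a, f a ∂μ := by
  have hmin_int : Integrable (fun a => min (f a) c) μ :=
    hf.mono (hf.aestronglyMeasurable.inf aestronglyMeasurable_const) <| by
      filter_upwards [hf0] with a ha
      rw [Real.norm_of_nonneg (le_min ha hc), Real.norm_of_nonneg ha]
      exact min_le_left _ _
  have htail := hf.integrableOn_meas_le hf0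
  rw [hf.integral_eq_integral_meas_le hf0, ← Ioc_union_Ioi_eq_Ioi hc,
    setIntegral_union Ioc_disjoint_Ioi_same measurableSet_Ioi
      (htail.mono_set Ioc_subset_Ioi_self) (htail.mono_set (Ioi_subset_Ioi hc)),
    hmin_int.integral_eq_integral_Ioc_meas_le
      (by filter_upwards [hf0] with a ha using le_min ha hc)
      (ae_of_all _ fun a => min_le_right _ _)]
  congr 1
  refine setIntegral_congr_fun measurableSet_Ioc fun t ht => ?_
  simp only [le_min_iff, ht.2, and_true]

end MeasureTheory

theorem min_sq_sq_le_mul_abs {x L : ℝ} (hL : 0 ≤ L) : min (x ^ 2) (L ^ 2) ≤ L * |x| := by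
  rcases le_total |x| L with h | h
  · nlinarith [min_le_left (x ^ 2) (L ^ 2), sq_abs x, abs_nonneg x]
  · nlinarith [min_le_right (x ^ 2) (L ^ 2)]

theorem abs_integral_lower_bound_general {Ω : Type} [MeasurableSpace Ω]
    (μ : Measure Ω) (ξ : Ω → ℝ)
    (hint : Integrable ξ μ)
    (hint2 : Integrable (fun ω => ξ ω ^ 2) μ) (hvar : (∫ ω, ξ ω ^ 2 ∂μ) = 1)
    (L : ℝ) (hL : 0 < L)
    (htail : (∫ t in Set.Ioi (L ^ 2), (μ {ω | t ≤ ξ ω ^ 2}).toReal) ≤ 1 / 2) :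
    1 / (4 * L) ≤ ∫ ω, |ξ ω| ∂μ := by
  have hsplit := hint2.integral_min_add_setIntegral_Ioi_meas_le
    (ae_of_all _ fun ω => sq_nonneg (ξ ω)) (sq_nonneg L)
  have htrunc : ∫ ω, min (ξ ω ^ 2) (L ^ 2) ∂μ ≤ L * ∫ ω, |ξ ω| ∂μ := by
    rw [← integral_const_mul]
    exact integral_mono_of_nonneg (ae_of_all _ fun ω => le_min (sq_nonneg _) (sq_nonneg _))
      (hint.abs.const_mul L) (ae_of_all _ fun ω => min_sq_sq_le_mul_abs hL.le)
  have hhalf : 1 / 2 ≤ L * ∫ ω, |ξ ω| ∂μ := by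
    simp only [measureReal_def] at hsplit
    linarith
  calc 1 / (4 * L) ≤ 1 / (2 * L) := by gcongr; norm_num
    _ ≤ ∫ ω, |ξ ω| ∂μ := by rw [div_le_iff₀ (by positivity)]; linarith

theorem abs_integral_lower_bound {Ω : Type} [MeasurableSpace Ω]
    (μ : Measure Ω) [IsProbabilityMeasure μ] (ξ : Ω → ℝ) (hmeas : Measurable ξ)
    (hint : Integrable ξ μ) (hmean : (∫ ω, ξ ω ∂μ) = 0)
    (hint2 : Integrable (fun ω => ξ ω ^ 2) μ) (hvar : (∫ ω, ξ ω ^ 2 ∂μ) = 1)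
    (L : ℝ) (hL : 0 < L)
    (htail : (∫ t in Set.Ioi (L ^ 2), (μ {ω | t ≤ ξ ω ^ 2}).toReal) ≤ 1 / 2) :
    1 / (4 * L) ≤ ∫ ω, |ξ ω| ∂μ :=
  abs_integral_lower_bound_general μ ξ hint hint2 hvar L hL htail
end

section
/- Let q ∈ N, e ≤ r ≤ √(ln q), and g₁,…,g_q be independent standard Gaussian variables. Define b ∈ R^q by b_i = max(0, g_i − r). Then P{‖b‖ ≤ 4√q · exp(−r²/8)} ≥ 1 − exp(−2√q). -/
/-!
Chernoff bound with exponent `1/2`. For a standard Gaussian `g`, on `{g > r}` the density times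
`exp ((g - r)² / 2)` is `exp (r² / 2 - r g) / √(2π)`, so
`E exp (max 0 (g - r)² / 2) ≤ 1 + exp (-r² / 2) / (√(2π) r) ≤ exp (exp (-r² / 4))`.
By independence `E exp (‖b‖² / 2) ≤ exp (q exp (-r² / 4))`, and Markov's inequality at
`‖b‖² = 16 q exp (-r² / 4)` leaves `exp (-7 q exp (-r² / 4))`. This is at most `exp (-2 √q)`
because `exp (r² / 4) ≤ √q` when `r² ≤ log q`.
-/

open MeasureTheory ProbabilityTheory Real Set
open scoped ENNReal

theorem lintegral_pi_prod_eq_pow {ι Ω : Type*} [Fintype ι] [MeasurableSpace Ω]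
    (μ : Measure Ω) [IsProbabilityMeasure μ] {f : Ω → ℝ≥0∞} (hf : Measurable f) :
    ∫⁻ x, ∏ i, f (x i) ∂(Measure.pi fun _ : ι => μ) = (∫⁻ y, f y ∂μ) ^ Fintype.card ι := by
  rw [lintegral_prod_eq_prod_lintegral_of_indepFun _ _
    (iIndepFun_pi fun _ => hf.aemeasurable) fun i => hf.comp (measurable_pi_apply i)]
  simp_rw [(measurePreserving_eval (fun _ : ι => μ) _).lintegral_comp hf, Finset.prod_const,
    Finset.card_univ]

theorem measure_lt_le_lintegral_exp_div {Ω : Type*} [MeasurableSpace Ω] (μ : Measure Ω)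
    {f : Ω → ℝ} (hf : Measurable f) (t : ℝ) :
    μ {ω | t < f ω} ≤ (∫⁻ ω, ENNReal.ofReal (exp (f ω)) ∂μ) / ENNReal.ofReal (exp t) :=
  (measure_mono fun _ h => ENNReal.ofReal_le_ofReal (exp_le_exp.2 (le_of_lt h))).trans
    (meas_ge_le_lintegral_div (by fun_prop) (by simp [exp_pos]) ENNReal.ofReal_ne_top)

theorem gaussianPDF_mul_exp_sq_sub_half (r x : ℝ) :
    gaussianPDF 0 1 x * ENNReal.ofReal (exp ((x - r) ^ 2 / 2))
      = ENNReal.ofReal ((√(2 * π))⁻¹ * exp (r ^ 2 / 2) * exp (-r * x)) := by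
  rw [gaussianPDF, ← ENNReal.ofReal_mul (gaussianPDFReal_nonneg 0 1 x), gaussianPDFReal]
  congr 1
  simp only [NNReal.coe_one, mul_one, sub_zero, mul_assoc, ← exp_add]
  ring_nf

theorem setLIntegral_Ioi_gaussianPDF_mul_exp_sq_sub_half {r : ℝ} (hr : 0 < r) :
    ∫⁻ x in Ioi r, gaussianPDF 0 1 x * ENNReal.ofReal (exp ((x - r) ^ 2 / 2))
      = ENNReal.ofReal (exp (-r ^ 2 / 2) / (√(2 * π) * r)) := by
  have hint : IntegrableOn (fun x => (√(2 * π))⁻¹ * exp (r ^ 2 / 2) * exp (-r * x)) (Ioi r) :=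
    (integrableOn_exp_mul_Ioi (neg_lt_zero.2 hr) r).const_mul _
  simp_rw [gaussianPDF_mul_exp_sq_sub_half r,
    ← ofReal_integral_eq_lintegral_ofReal hint (ae_of_all _ fun x => by positivity),
    integral_const_mul, integral_exp_mul_Ioi (neg_lt_zero.2 hr)]
  congr 1
  rw [show -r ^ 2 / 2 = r ^ 2 / 2 + -r * r by ring, exp_add]
  field_simp

theorem lintegral_gaussianReal_exp_sq_max_sub_half_le {r : ℝ} (hr : 1 ≤ r) :
    ∫⁻ x, ENNReal.ofReal (exp (max 0 (x - r) ^ 2 / 2)) ∂gaussianReal 0 1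
      ≤ ENNReal.ofReal (exp (exp (-r ^ 2 / 4))) := by
  rw [← lintegral_add_compl _ measurableSet_Iic, compl_Iic]
  have below : ∫⁻ x in Iic r, ENNReal.ofReal (exp (max 0 (x - r) ^ 2 / 2)) ∂gaussianReal 0 1
      ≤ 1 := by
    rw [setLIntegral_congr_fun (g := fun _ => 1) measurableSet_Iic fun x (hx : x ≤ r) => by
      simp [max_eq_left (sub_nonpos.2 hx)]]
    simpa using prob_le_one
  have above : ∫⁻ x in Ioi r, ENNReal.ofReal (exp (max 0 (x - r) ^ 2 / 2)) ∂gaussianReal 0 1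
      ≤ ENNReal.ofReal (exp (-r ^ 2 / 4)) := by
    rw [gaussianReal_of_var_ne_zero 0 one_ne_zero, setLIntegral_withDensity_eq_setLIntegral_mul _
      (measurable_gaussianPDF 0 1) (by fun_prop) measurableSet_Ioi,
      setLIntegral_congr_fun measurableSet_Ioi fun x (hx : r < x) => by
        rw [Pi.mul_apply, max_eq_right (sub_nonneg.2 hx.le)],
      setLIntegral_Ioi_gaussianPDF_mul_exp_sq_sub_half (one_pos.trans_le hr)]
    refine ENNReal.ofReal_le_ofReal ((div_le_self (exp_nonneg _) ?_).trans
      (exp_le_exp.2 (by nlinarith)))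
    nlinarith [Real.le_sqrt_of_sq_le (show (1 : ℝ) ^ 2 ≤ 2 * π by nlinarith [pi_gt_three])]
  calc _ ≤ 1 + ENNReal.ofReal (exp (-r ^ 2 / 4)) := add_le_add below above
    _ = ENNReal.ofReal (exp (-r ^ 2 / 4) + 1) := by
      rw [ENNReal.ofReal_add (exp_nonneg _) zero_le_one, ENNReal.ofReal_one, add_comm]
    _ ≤ _ := ENNReal.ofReal_le_ofReal (add_one_le_exp _)

theorem pi_gaussianReal_sum_sq_max_sub_gt_le {ι : Type*} [Fintype ι] {r : ℝ} (hr : 1 ≤ r)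
    (t : ℝ) :
    (Measure.pi fun _ : ι => gaussianReal 0 1) {g | t < ∑ i, max 0 (g i - r) ^ 2}
      ≤ ENNReal.ofReal (exp (Fintype.card ι * exp (-r ^ 2 / 4) - t / 2)) := by
  have hset : {g : ι → ℝ | t < ∑ i, max 0 (g i - r) ^ 2}
      = {g | t / 2 < ∑ i, max 0 (g i - r) ^ 2 / 2} := by
    ext g
    simp only [mem_ofPred_eq, ← Finset.sum_div]
    exact (div_lt_div_iff_of_pos_right two_pos).symm
  have hprod : ∀ g : ι → ℝ, ENNReal.ofReal (exp (∑ i, max 0 (g i - r) ^ 2 / 2))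
      = ∏ i, ENNReal.ofReal (exp (max 0 (g i - r) ^ 2 / 2)) := fun g => by
    rw [exp_sum, ENNReal.ofReal_prod_of_nonneg fun i _ => exp_nonneg _]
  calc _ ≤ _ := hset ▸ measure_lt_le_lintegral_exp_div _ (by fun_prop) (t / 2)
    _ = (∫⁻ x, ENNReal.ofReal (exp (max 0 (x - r) ^ 2 / 2)) ∂gaussianReal 0 1) ^ Fintype.card ι
          / ENNReal.ofReal (exp (t / 2)) := by
      simp_rw [hprod, lintegral_pi_prod_eq_pow _ (by fun_prop :
        Measurable fun x : ℝ => ENNReal.ofReal (exp (max 0 (x - r) ^ 2 / 2)))]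
    _ ≤ ENNReal.ofReal (exp (exp (-r ^ 2 / 4))) ^ Fintype.card ι / ENNReal.ofReal (exp (t / 2)) :=
      by gcongr; exact lintegral_gaussianReal_exp_sq_max_sub_half_le hr
    _ = _ := by
      rw [← ENNReal.ofReal_pow (exp_nonneg _), ← exp_nat_mul,
        ← ENNReal.ofReal_div_of_pos (exp_pos _), ← exp_sub]

theorem sqrt_le_mul_exp_neg_sq_div_four {x r : ℝ} (hx : 0 < x) (h : r ^ 2 ≤ log x) :
    √x ≤ x * exp (-r ^ 2 / 4) := by
  have hsq : exp (r ^ 2 / 4) ≤ √x := by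
    rw [← exp_log hx, ← exp_half]
    exact exp_le_exp.2 (by nlinarith [sq_nonneg r])
  rw [neg_div, exp_neg, ← div_eq_mul_inv, le_div_iff₀ (exp_pos _)]
  calc √x * exp (r ^ 2 / 4) ≤ √x * √x := by gcongr
    _ = x := mul_self_sqrt hx.le

theorem norm_truncated_gaussians_bound (q : ℕ) (r : ℝ)
    (hr : Real.exp 1 ≤ r) (hr' : r ≤ Real.sqrt (Real.log q)) :
    ENNReal.ofReal (1 - Real.exp (-2 * Real.sqrt q)) ≤
      (Measure.pi fun _ : Fin q => gaussianReal 0 1)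
        {g : Fin q → ℝ |
          Real.sqrt (∑ i, max 0 (g i - r) ^ 2) ≤ 4 * Real.sqrt q * Real.exp (-r ^ 2 / 8)} := by
  have hr1 : 1 ≤ r := by linarith [add_one_le_exp (1 : ℝ)]
  have hlog : r ^ 2 ≤ log q := (le_sqrt' (by linarith)).1 hr'
  have hq : (0 : ℝ) < q := one_pos.trans ((log_pos_iff q.cast_nonneg).1 (by nlinarith))
  set s := 4 * √q * exp (-r ^ 2 / 8)
  have hs : s ^ 2 / 2 = 8 * q * exp (-r ^ 2 / 4) := by
    rw [mul_pow, mul_pow, sq_sqrt hq.le, ← exp_nat_mul]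
    ring_nf
  have hcompl : {g : Fin q → ℝ | √(∑ i, max 0 (g i - r) ^ 2) ≤ s}ᶜ
      = {g | s ^ 2 < ∑ i, max 0 (g i - r) ^ 2} := by
    ext g
    simp [lt_sqrt (by positivity : 0 ≤ s)]
  have htail := pi_gaussianReal_sum_sq_max_sub_gt_le (ι := Fin q) hr1 (s ^ 2)
  rw [Fintype.card_fin, hs, ← hcompl] at htail
  have hcompl_le := htail.trans <| ENNReal.ofReal_le_ofReal <| exp_le_exp.2 (show
    q * exp (-r ^ 2 / 4) - 8 * q * exp (-r ^ 2 / 4) ≤ -2 * √q by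
      nlinarith [sqrt_le_mul_exp_neg_sq_div_four hq hlog, sqrt_nonneg q])
  have hE : MeasurableSet {g : Fin q → ℝ | √(∑ i, max 0 (g i - r) ^ 2) ≤ s} :=
    measurableSet_le (by fun_prop) measurable_const
  calc ENNReal.ofReal (1 - exp (-2 * √q)) = 1 - ENNReal.ofReal (exp (-2 * √q)) := by
        rw [ENNReal.ofReal_sub _ (exp_nonneg _), ENNReal.ofReal_one]
    _ ≤ 1 - _ := tsub_le_tsub_left hcompl_le 1
    _ = _ := by rw [← prob_compl_eq_one_sub hE.compl, compl_compl]
end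

section
/- Let g be a standard Gaussian random variable and λ ∈ (0, 1/2), r ≥ e, with λ = (2 + r²/ln r)^{-1}. Then ∫_1^∞ P{exp(λ · max(0, g−r)²) ≥ τ} dτ ≤ exp(−r²/2) + 2λ r^{1 − 1/(2λ)} / (1 − 2λ) ≤ 2 exp(−r²/2). -/
/-! For `τ > 1` the event `τ ≤ exp (λ (g - r)₊²)` is `g ≥ r + s` with `s² = log τ / λ`, so the
Chernoff bound gives it probability at most `exp (-(r + s)² / 2) ≤ exp (-r² / 2) τ ^ (-1 / (2λ))`.
Integrating over `τ > 1` gives `exp (-r² / 2) · 2λ / (1 - 2λ)`. The choice of `λ` is exactly the one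
making `r ^ (1 - 1 / (2λ)) = exp (-r² / 2)`, and it forces `λ ≤ 1 / 4`, i.e. `2λ / (1 - 2λ) ≤ 1`. -/

open MeasureTheory ProbabilityTheory Real Set
open scoped NNReal

lemma gaussianReal_real_add_le_le_exp {μ : ℝ} {v : ℝ≥0} (hv : v ≠ 0) {ε : ℝ} (hε : 0 ≤ ε) :
    (gaussianReal μ v).real {x | μ + ε ≤ x} ≤ exp (-ε ^ 2 / (2 * v)) := by
  have hv0 : (0 : ℝ) < v := by positivity
  -- Chernoff bound at the optimal parameter `ε / v`
  refine (measure_ge_le_exp_mul_mgf (X := fun x ↦ x) (μ + ε) (div_nonneg hε hv0.le)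
    (integrable_exp_mul_gaussianReal _)).trans_eq ?_
  rw [mgf_fun_id_gaussianReal, ← exp_add]
  congr 1
  field_simp
  ring

lemma setOf_le_exp_mul_max_sq_subset {lam r τ : ℝ} (hlam : 0 < lam) (hτ : 1 < τ) :
    {g : ℝ | τ ≤ exp (lam * max 0 (g - r) ^ 2)} ⊆ {g | r + √(log τ / lam) ≤ g} := by
  intro g hg
  have hlog : log τ / lam ≤ max 0 (g - r) ^ 2 := by
    rw [div_le_iff₀' hlam, ← exp_le_exp, exp_log (by linarith)]
    exact hg
  have hpos : 0 < g - r := by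
    by_contra! h
    rw [max_eq_left h] at hlog
    linarith [div_pos (log_pos hτ) hlam]
  rw [max_eq_right hpos.le] at hlog
  have hsqrt := Real.sqrt_le_iff.2 ⟨hpos.le, hlog⟩
  show r + √(log τ / lam) ≤ g
  linarith

lemma gaussianReal_real_setOf_le_exp_mul_max_sq_le {lam r τ : ℝ} (hlam : 0 < lam) (hr : 0 ≤ r)
    (hτ : 1 < τ) :
    (gaussianReal 0 1).real {g | τ ≤ exp (lam * max 0 (g - r) ^ 2)} ≤
      exp (-r ^ 2 / 2) * τ ^ (-(2 * lam)⁻¹) := by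
  set s := √(log τ / lam)
  have hs : s ^ 2 = log τ / lam := sq_sqrt (div_pos (log_pos hτ) hlam).le
  calc (gaussianReal 0 1).real {g | τ ≤ exp (lam * max 0 (g - r) ^ 2)}
      ≤ (gaussianReal 0 1).real {g | 0 + (r + s) ≤ g} := by
        rw [zero_add]
        exact measureReal_mono (setOf_le_exp_mul_max_sq_subset hlam hτ)
    _ ≤ exp (-(r + s) ^ 2 / (2 * (1 : ℝ≥0))) :=
        gaussianReal_real_add_le_le_exp one_ne_zero (by positivity)
    _ ≤ exp (-r ^ 2 / 2 + -s ^ 2 / 2) := by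
        gcongr
        push_cast
        nlinarith [mul_nonneg hr (sqrt_nonneg (log τ / lam))]
    _ = exp (-r ^ 2 / 2) * τ ^ (-(2 * lam)⁻¹) := by
        rw [exp_add, hs, rpow_def_of_pos (by linarith)]
        congr 2
        field_simp

lemma integral_gaussianReal_real_setOf_le_exp_mul_max_sq_le {lam r : ℝ} (hlam : 0 < lam)
    (hlam2 : lam < 1 / 2) (hr : 0 ≤ r) :
    ∫ τ in Ioi 1, (gaussianReal 0 1).real {g | τ ≤ exp (lam * max 0 (g - r) ^ 2)} ≤
      exp (-r ^ 2 / 2) * (2 * lam / (1 - 2 * lam)) := by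
  have hexp : -(2 * lam)⁻¹ < -1 := by
    rw [neg_lt_neg_iff, one_lt_inv₀ (by positivity)]
    linarith
  calc ∫ τ in Ioi 1, (gaussianReal 0 1).real {g | τ ≤ exp (lam * max 0 (g - r) ^ 2)}
      ≤ ∫ τ in Ioi 1, exp (-r ^ 2 / 2) * τ ^ (-(2 * lam)⁻¹) :=
        integral_mono_of_nonneg (ae_of_all _ fun _ ↦ measureReal_nonneg)
          ((integrableOn_Ioi_rpow_of_lt hexp one_pos).const_mul _)
          ((ae_restrict_iff' measurableSet_Ioi).2 (ae_of_all _ fun _ hτ ↦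
            gaussianReal_real_setOf_le_exp_mul_max_sq_le hlam hr hτ))
    _ = exp (-r ^ 2 / 2) * (2 * lam / (1 - 2 * lam)) := by
        rw [integral_const_mul, integral_Ioi_rpow_of_lt hexp one_pos, one_rpow]
        congr 1
        rw [div_eq_div_iff (by linarith) (by linarith)]
        field_simp
        ring

lemma two_le_sq_div_log {r : ℝ} (hr : 1 < r) : 2 ≤ r ^ 2 / log r := by
  rw [le_div_iff₀ (log_pos hr)]
  nlinarith [log_le_sub_one_of_pos (zero_lt_one.trans hr)]

lemma rpow_one_sub_one_div_two_mul_eq_exp {lam r : ℝ} (hr : 1 < r)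
    (hlam : lam = (2 + r ^ 2 / log r)⁻¹) :
    r ^ (1 - 1 / (2 * lam)) = exp (-r ^ 2 / 2) := by
  have hlog := log_pos hr
  rw [rpow_def_of_pos (zero_lt_one.trans hr), hlam]
  congr 1
  field_simp
  ring

theorem truncated_gaussian_laplace_tail_bound_general (r lam : ℝ) (hr : Real.exp 1 ≤ r)
    (hlamdef : lam = (2 + r ^ 2 / Real.log r)⁻¹) :
    (∫ τ in Set.Ioi (1 : ℝ),
        ((gaussianReal 0 1) {g : ℝ | τ ≤ Real.exp (lam * max 0 (g - r) ^ 2)}).toReal) ≤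
      Real.exp (-r ^ 2 / 2) + 2 * lam * r ^ (1 - 1 / (2 * lam)) / (1 - 2 * lam) ∧
    Real.exp (-r ^ 2 / 2) + 2 * lam * r ^ (1 - 1 / (2 * lam)) / (1 - 2 * lam) ≤
      2 * Real.exp (-r ^ 2 / 2) := by
  have hr1 : 1 < r := (one_lt_exp_iff.2 one_pos).trans_le hr
  have hquot := two_le_sq_div_log hr1
  have hlam0 : 0 < lam := by rw [hlamdef]; positivity
  have hlam4 : lam ≤ 1 / 4 := by rw [hlamdef, one_div]; gcongr; linarith
  have hfrac : 2 * lam / (1 - 2 * lam) ≤ 1 := by rw [div_le_one (by linarith)]; linarith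
  have hE := exp_pos (-r ^ 2 / 2)
  rw [rpow_one_sub_one_div_two_mul_eq_exp hr1 hlamdef, mul_div_right_comm]
  constructor
  · calc _ ≤ exp (-r ^ 2 / 2) * (2 * lam / (1 - 2 * lam)) :=
          integral_gaussianReal_real_setOf_le_exp_mul_max_sq_le hlam0 (by linarith) (by linarith)
      _ ≤ _ := by nlinarith [div_nonneg hlam0.le (by linarith : (0 : ℝ) ≤ 1 - 2 * lam)]
  · nlinarith

theorem truncated_gaussian_laplace_tail_bound (r lam : ℝ) (hr : Real.exp 1 ≤ r)
    (hlam : lam ∈ Set.Ioo (0 : ℝ) (1 / 2))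
    (hlamdef : lam = (2 + r ^ 2 / Real.log r)⁻¹) :
    (∫ τ in Set.Ioi (1 : ℝ),
        ((gaussianReal 0 1) {g : ℝ | τ ≤ Real.exp (lam * max 0 (g - r) ^ 2)}).toReal) ≤
      Real.exp (-r ^ 2 / 2) + 2 * lam * r ^ (1 - 1 / (2 * lam)) / (1 - 2 * lam) ∧
    Real.exp (-r ^ 2 / 2) + 2 * lam * r ^ (1 - 1 / (2 * lam)) / (1 - 2 * lam) ≤
      2 * Real.exp (-r ^ 2 / 2) :=
  truncated_gaussian_laplace_tail_bound_general r lam hr hlamdef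
end

section
/- Let K > 1, and let F be the N×N lower triangular matrix with entries f_{ii} = 1 and f_{ij} = δ_j/δ_i for i > j, where δ_i = √(t_i − t_{i−1}) (with t_0 = 0) for an increasing sequence t_1 < … < t_N satisfying t_i ≥ K t_{i−1} for i ≥ 2 and t_1 > 0. Then the operator norm satisfies ‖F‖ ≤ 1 + (K−1)^{-1/2} ∑_{j≥0} K^{-j/2} and ‖F^{-1}‖ ≤ 1 + (K−1)^{-1/2}. -/
noncomputable def matOpNorm {m n : ℕ} (A : Matrix (Fin m) (Fin n) ℝ) : ℝ :=
  ‖LinearMap.toContinuousLinearMap (Matrix.toEuclideanLin A)‖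

lemma schur_bound {N : ℕ} (A : Matrix (Fin N) (Fin N) ℝ) {R C : ℝ} (hR0 : 0 ≤ R) (hC0 : 0 ≤ C)
    (hrow : ∀ i, ∑ j, |A i j| ≤ R) (hcol : ∀ j, ∑ i, |A i j| ≤ C) :
    matOpNorm A ≤ Real.sqrt (R * C) := by
  apply ContinuousLinearMap.opNorm_le_bound _ (Real.sqrt_nonneg _)
  intro x
  have happ : ∀ i, (LinearMap.toContinuousLinearMap (Matrix.toEuclideanLin A)) x i
      = ∑ j, A i j * x j := by
    intro i
    simp [Matrix.toEuclideanLin_apply, Matrix.mulVec]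
    rfl
  have hnx : ‖x‖ = Real.sqrt (∑ j, x j ^ 2) := by
    rw [EuclideanSpace.norm_eq]
    congr 1; apply Finset.sum_congr rfl; intros
    rw [Real.norm_eq_abs, sq_abs]
  have key : ∑ i, (∑ j, A i j * x j) ^ 2 ≤ R * C * ∑ j, x j ^ 2 := by
    have step1 : ∀ i : Fin N, (∑ j, A i j * x j) ^ 2 ≤ R * ∑ j, |A i j| * x j ^ 2 := by
      intro i
      have h1 : (∑ j, A i j * x j) ^ 2 ≤ (∑ j, |A i j| * |x j|) ^ 2 := by
        rw [← sq_abs (∑ j, A i j * x j)]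
        apply pow_le_pow_left₀ (abs_nonneg _)
        exact (Finset.abs_sum_le_sum_abs _ _).trans (le_of_eq (Finset.sum_congr rfl
          (by intros; rw [abs_mul])))
      have h2 : (∑ j, |A i j| * |x j|) ^ 2 ≤ (∑ j, |A i j|) * ∑ j, |A i j| * x j ^ 2 := by
        have := Finset.sum_mul_sq_le_sq_mul_sq Finset.univ
          (fun j => Real.sqrt |A i j|) (fun j => Real.sqrt |A i j| * |x j|)
        calc (∑ j, |A i j| * |x j|) ^ 2
            = (∑ j, Real.sqrt |A i j| * (Real.sqrt |A i j| * |x j|)) ^ 2 := by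
              congr 1; apply Finset.sum_congr rfl; intros j _
              rw [← mul_assoc, Real.mul_self_sqrt (abs_nonneg _)]
          _ ≤ (∑ j, Real.sqrt |A i j| ^ 2) * ∑ j, (Real.sqrt |A i j| * |x j|) ^ 2 := this
          _ = (∑ j, |A i j|) * ∑ j, |A i j| * x j ^ 2 := by
              congr 1
              · apply Finset.sum_congr rfl; intros; rw [Real.sq_sqrt (abs_nonneg _)]
              · apply Finset.sum_congr rfl; intros j _
                rw [mul_pow, Real.sq_sqrt (abs_nonneg _), sq_abs]
      have h3 : (∑ j, |A i j|) * (∑ j, |A i j| * x j ^ 2) ≤ R * ∑ j, |A i j| * x j ^ 2 := by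
        apply mul_le_mul_of_nonneg_right (hrow i)
        positivity
      exact (h1.trans h2).trans h3
    calc ∑ i, (∑ j, A i j * x j) ^ 2 ≤ ∑ i, R * ∑ j, |A i j| * x j ^ 2 :=
          Finset.sum_le_sum fun i _ => step1 i
      _ = R * ∑ j, (∑ i, |A i j|) * x j ^ 2 := by
          rw [← Finset.mul_sum]; congr 1
          rw [Finset.sum_comm]
          apply Finset.sum_congr rfl; intros j _
          rw [Finset.sum_mul]
      _ ≤ R * ∑ j, C * x j ^ 2 := by
          apply mul_le_mul_of_nonneg_left _ hR0
          exact Finset.sum_le_sum fun j _ =>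
            mul_le_mul_of_nonneg_right (hcol j) (sq_nonneg _)
      _ = R * C * ∑ j, x j ^ 2 := by rw [← Finset.mul_sum, mul_assoc]
  calc ‖(LinearMap.toContinuousLinearMap (Matrix.toEuclideanLin A)) x‖
      = Real.sqrt (∑ i, (∑ j, A i j * x j) ^ 2) := by
        rw [EuclideanSpace.norm_eq]
        congr 1; apply Finset.sum_congr rfl; intro i _
        rw [happ i, Real.norm_eq_abs, sq_abs]
    _ ≤ Real.sqrt (R * C * ∑ j, x j ^ 2) := Real.sqrt_le_sqrt key
    _ = Real.sqrt (R * C) * ‖x‖ := by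
        rw [hnx, ← Real.sqrt_mul (by positivity)]

section
variable (N : ℕ) (K : ℝ) (hK : 1 < K) (t : ℕ → ℝ)

lemma tsumm (hK : 1 < K) : Summable (fun j : ℕ => K ^ (-(j : ℝ) / 2)) := by
  have hK0 : (0:ℝ) < K := lt_trans one_pos hK
  have heq : ∀ j : ℕ, K ^ (-(j : ℝ) / 2) = (K ^ (-(1:ℝ)/2)) ^ j := by
    intro j
    rw [← Real.rpow_natCast (K ^ (-(1:ℝ)/2)) j, ← Real.rpow_mul hK0.le]
    ring_nf
  rw [funext heq]
  apply summable_geometric_of_lt_one (Real.rpow_nonneg hK0.le _)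
  exact Real.rpow_lt_one_of_one_lt_of_neg hK (by norm_num)

lemma chain_ineq (hK : 1 < K) (ht0 : t 0 = 0) (ht1 : 0 < t 1)
    (hmono : ∀ i : ℕ, i < N → t i < t (i + 1))
    (hgrow : ∀ i : ℕ, 2 ≤ i → i ≤ N → K * t (i - 1) ≤ t i) :
    ∀ j i : ℕ, j < i → i < N →
      (K - 1) * K ^ (i - j - 1) * (t (j + 1) - t j) ≤ t (i + 1) - t i := by
  have hK0 : (0:ℝ) < K := lt_trans one_pos hK
  have tnn : ∀ i, i ≤ N → 0 ≤ t i := by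
    intro i hi
    induction i with
    | zero => rw [ht0]
    | succ n ih => exact le_of_lt (lt_of_le_of_lt (ih (le_of_lt (Nat.lt_of_succ_le hi)))
        (hmono n (Nat.lt_of_succ_le hi)))
  intro j i hji hiN
  have geo : ∀ m : ℕ, j + 1 + m ≤ N → K ^ m * t (j + 1) ≤ t (j + 1 + m) := by
    intro m
    induction m with
    | zero => intro _; simp
    | succ n ih =>
      intro hm
      have h1 : K * t (j + 1 + n) ≤ t (j + 1 + (n+1)) := by
        have := hgrow (j + 1 + n + 1) (by omega) (by omega)
        simpa [Nat.add_sub_cancel, show j+1+n+1 = j+1+(n+1) by omega] using this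
      calc K ^ (n+1) * t (j+1) = K * (K ^ n * t (j+1)) := by ring
        _ ≤ K * t (j+1+n) := by
            apply mul_le_mul_of_nonneg_left (ih (by omega)) hK0.le
        _ ≤ t (j+1+(n+1)) := h1
  set m := i - j - 1 with hm
  have him : i = j + 1 + m := by omega
  have h2 : K ^ m * t (j + 1) ≤ t i := by rw [him]; exact geo m (by omega)
  have h3 : t (j + 1) - t j ≤ t (j + 1) := by
    have := tnn j (by omega); linarith
  have h4 : K * t i ≤ t (i + 1) := by
    have := hgrow (i + 1) (by omega) (by omega)
    simpa using this
  have h5 : (K - 1) * t i ≤ t (i + 1) - t i := by linarith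
  have h6 : 0 ≤ t (j+1) := tnn (j+1) (by omega)
  have hKm : (0:ℝ) < K ^ m := pow_pos hK0 m
  calc (K - 1) * K ^ m * (t (j + 1) - t j) ≤ (K - 1) * K ^ m * t (j+1) := by
        apply mul_le_mul_of_nonneg_left h3
        exact mul_nonneg (by linarith) hKm.le
    _ = (K - 1) * (K ^ m * t (j+1)) := by ring
    _ ≤ (K - 1) * t i := by apply mul_le_mul_of_nonneg_left h2; linarith
    _ ≤ t (i + 1) - t i := h5

lemma ratio_bound (hK : 1 < K) (ht0 : t 0 = 0) (ht1 : 0 < t 1)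
    (hmono : ∀ i : ℕ, i < N → t i < t (i + 1))
    (hgrow : ∀ i : ℕ, 2 ≤ i → i ≤ N → K * t (i - 1) ≤ t i) :
    ∀ j i : ℕ, j < i → i < N →
      Real.sqrt (t (j+1) - t j) / Real.sqrt (t (i+1) - t i) ≤
        K ^ (-(((i - j - 1 : ℕ)) : ℝ) / 2) / Real.sqrt (K - 1) := by
  have hK0 : (0:ℝ) < K := lt_trans one_pos hK
  have hK1 : (0:ℝ) < K - 1 := by linarith
  intro j i hji hiN
  set m := i - j - 1 with hm
  have hchain := chain_ineq N K t hK ht0 ht1 hmono hgrow j i hji hiN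
  have hΔi : 0 < t (i+1) - t i := sub_pos.2 (hmono i hiN)
  have hΔj : 0 < t (j+1) - t j := sub_pos.2 (hmono j (by omega))
  have hKm : (0:ℝ) < K ^ m := pow_pos hK0 m
  have hrpow : K ^ (-(m : ℝ) / 2) = Real.sqrt ((K ^ m)⁻¹) := by
    rw [show ((K ^ m)⁻¹ : ℝ) = K ^ (-(m:ℝ)) by
      rw [← Real.rpow_natCast K m, ← Real.rpow_neg hK0.le]]
    rw [Real.sqrt_eq_rpow, ← Real.rpow_mul hK0.le]
    ring_nf
  rw [hrpow, div_le_div_iff₀ (Real.sqrt_pos.2 hΔi) (Real.sqrt_pos.2 hK1)]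
  rw [← Real.sqrt_mul hΔj.le, ← Real.sqrt_mul (by positivity)]
  apply Real.sqrt_le_sqrt
  rw [inv_mul_eq_div, le_div_iff₀ hKm]
  nlinarith [hchain]
end

lemma sum_ite_le_aux {N : ℕ} {c : ℝ} (hc : 0 ≤ c) (p : Fin N → Prop) [DecidablePred p]
    (hp : ∀ a b, p a → p b → a = b) :
    ∑ j, (if p j then c else (0:ℝ)) ≤ c := by
  classical
  rw [← Finset.sum_filter, Finset.sum_const]
  have hcard : (Finset.univ.filter p).card ≤ 1 := by
    apply Finset.card_le_one.2
    intro a ha b hb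
    exact hp a b (Finset.mem_filter.1 ha).2 (Finset.mem_filter.1 hb).2
  rcases Nat.le_one_iff_eq_zero_or_eq_one.1 hcard with h | h <;> rw [h] <;> simp [hc]

lemma sum_map_le_tsum {g : ℕ → ℝ} (hg : ∀ d, 0 ≤ g d) (hs : Summable g)
    {ι : Type*} (s : Finset ι) (e : ι → ℕ)
    (he : ∀ a ∈ s, ∀ b ∈ s, e a = e b → a = b) :
    ∑ i ∈ s, g (e i) ≤ ∑' d, g d := by
  rw [← Finset.sum_image (f := g) he]
  exact Summable.sum_le_tsum _ (fun d _ => hg d) hs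
theorem triangular_matrix_norm_bounds (N : ℕ) (K : ℝ) (hK : 1 < K)
    (t : ℕ → ℝ) (ht0 : t 0 = 0) (ht1 : 0 < t 1)
    (hmono : ∀ i : ℕ, i < N → t i < t (i + 1))
    (hgrow : ∀ i : ℕ, 2 ≤ i → i ≤ N → K * t (i - 1) ≤ t i)
    (F : Matrix (Fin N) (Fin N) ℝ)
    (hF : ∀ i j : Fin N, F i j =
      if (j : ℕ) ≤ (i : ℕ) then
        Real.sqrt (t ((j : ℕ) + 1) - t (j : ℕ)) / Real.sqrt (t ((i : ℕ) + 1) - t (i : ℕ))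
      else 0) :
    matOpNorm F ≤ 1 + (∑' j : ℕ, K ^ (-(j : ℝ) / 2)) / Real.sqrt (K - 1) ∧
      matOpNorm F⁻¹ ≤ 1 + 1 / Real.sqrt (K - 1) := by
  classical
  have hK0 : (0:ℝ) < K := lt_trans one_pos hK
  have hK1 : (0:ℝ) < K - 1 := by linarith
  set s : ℝ := Real.sqrt (K - 1) with hs_def
  have hs : 0 < s := Real.sqrt_pos.2 hK1
  set δ : ℕ → ℝ := fun n => Real.sqrt (t (n + 1) - t n) with hδ_def
  set g : ℕ → ℝ := fun d => K ^ (-(d : ℝ) / 2) with hg_def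
  have hg0 : ∀ d, 0 ≤ g d := fun d => Real.rpow_nonneg hK0.le _
  have hgsum : Summable g := tsumm K hK
  set T : ℝ := ∑' j : ℕ, K ^ (-(j : ℝ) / 2) with hT_def
  have hTg : T = ∑' d, g d := rfl
  have hT0 : 0 ≤ T := by rw [hTg]; exact tsum_nonneg hg0
  have hF' : ∀ i j : Fin N, F i j = if (j : ℕ) ≤ (i : ℕ) then δ j / δ i else 0 := hF
  have hδnn : ∀ n, 0 ≤ δ n := fun n => Real.sqrt_nonneg _
  have hδpos : ∀ i : ℕ, i < N → 0 < δ i := fun i hi =>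
    Real.sqrt_pos.2 (sub_pos.2 (hmono i hi))
  have hratio : ∀ j i : ℕ, j < i → i < N → δ j / δ i ≤ g (i - j - 1) / s :=
    fun j i h1 h2 => ratio_bound N K t hK ht0 ht1 hmono hgrow j i h1 h2
  have hg_zero : g 0 = 1 := by
    rw [hg_def]; norm_num
  -- row bound for F
  have hrowF : ∀ i : Fin N, ∑ j, |F i j| ≤ 1 + T / s := by
    intro i
    have point : ∀ j : Fin N, |F i j| ≤
        (if j = i then (1:ℝ) else 0) +
          (if (j : ℕ) < (i : ℕ) then g ((i:ℕ) - (j:ℕ) - 1) / s else 0) := by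
      intro j
      rcases lt_trichotomy (j : ℕ) (i : ℕ) with h | h | h
      · have h0 : ¬ (j = i) := fun hc => by rw [hc] at h; omega
        rw [hF' i j, if_pos h.le, if_neg h0, if_pos h, zero_add,
          abs_of_nonneg (div_nonneg (hδnn _) (hδnn _))]
        exact hratio j i h i.isLt
      · have hji : j = i := Fin.ext h
        rw [hF' i j, if_pos h.le, if_pos hji, if_neg (by omega)]
        have : δ (j:ℕ) / δ (i:ℕ) = 1 := by
          rw [h]; exact div_self (hδpos i i.isLt).ne'
        rw [this]; norm_num
      · rw [hF' i j, if_neg (by omega), if_neg (by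
          intro hc; rw [hc] at h; omega), if_neg (by omega)]
        simp
    calc ∑ j, |F i j| ≤ ∑ j, ((if j = i then (1:ℝ) else 0) +
          (if (j : ℕ) < (i : ℕ) then g ((i:ℕ) - (j:ℕ) - 1) / s else 0)) :=
          Finset.sum_le_sum fun j _ => point j
      _ = 1 + ∑ j : Fin N, (if (j : ℕ) < (i : ℕ) then g ((i:ℕ) - (j:ℕ) - 1) / s else 0) := by
          rw [Finset.sum_add_distrib, Finset.sum_ite_eq' Finset.univ i (fun _ => (1:ℝ)),
            if_pos (Finset.mem_univ i)]
      _ ≤ 1 + T / s := by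
          gcongr
          rw [← Finset.sum_filter, ← Finset.sum_div]
          rw [hTg]
          gcongr
          apply sum_map_le_tsum hg0 hgsum _ (fun j : Fin N => (i:ℕ) - (j:ℕ) - 1)
          intro a ha b hb hab
          have ha' := (Finset.mem_filter.1 ha).2
          have hb' := (Finset.mem_filter.1 hb).2
          exact Fin.ext (by omega)
  -- column bound for F
  have hcolF : ∀ j : Fin N, ∑ i, |F i j| ≤ 1 + T / s := by
    intro j
    have point : ∀ i : Fin N, |F i j| ≤
        (if i = j then (1:ℝ) else 0) +
          (if (j : ℕ) < (i : ℕ) then g ((i:ℕ) - (j:ℕ) - 1) / s else 0) := by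
      intro i
      rcases lt_trichotomy (j : ℕ) (i : ℕ) with h | h | h
      · have h0 : ¬ (i = j) := fun hc => by rw [hc] at h; omega
        rw [hF' i j, if_pos h.le, if_neg h0, if_pos h, zero_add,
          abs_of_nonneg (div_nonneg (hδnn _) (hδnn _))]
        exact hratio j i h i.isLt
      · have hji : i = j := Fin.ext h.symm
        rw [hF' i j, if_pos h.le, if_pos hji, if_neg (by omega)]
        have : δ (j:ℕ) / δ (i:ℕ) = 1 := by
          rw [h]; exact div_self (hδpos i i.isLt).ne'
        rw [this]; norm_num
      · rw [hF' i j, if_neg (by omega), if_neg (by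
          intro hc; rw [hc] at h; omega), if_neg (by omega)]
        simp
    calc ∑ i, |F i j| ≤ ∑ i, ((if i = j then (1:ℝ) else 0) +
          (if (j : ℕ) < (i : ℕ) then g ((i:ℕ) - (j:ℕ) - 1) / s else 0)) :=
          Finset.sum_le_sum fun i _ => point i
      _ = 1 + ∑ i : Fin N, (if (j : ℕ) < (i : ℕ) then g ((i:ℕ) - (j:ℕ) - 1) / s else 0) := by
          rw [Finset.sum_add_distrib, Finset.sum_ite_eq' Finset.univ j (fun _ => (1:ℝ)),
            if_pos (Finset.mem_univ j)]
      _ ≤ 1 + T / s := by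
          gcongr
          rw [← Finset.sum_filter, ← Finset.sum_div]
          rw [hTg]
          gcongr
          apply sum_map_le_tsum hg0 hgsum _ (fun i : Fin N => (i:ℕ) - (j:ℕ) - 1)
          intro a ha b hb hab
          have ha' := (Finset.mem_filter.1 ha).2
          have hb' := (Finset.mem_filter.1 hb).2
          exact Fin.ext (by omega)
  have hB0 : (0:ℝ) ≤ 1 + T / s := by positivity
  have part1 : matOpNorm F ≤ 1 + T / s := by
    have h := schur_bound F hB0 hB0 hrowF hcolF
    rwa [Real.sqrt_mul_self hB0] at h
  -- inverse
  set G : Matrix (Fin N) (Fin N) ℝ := Matrix.of (fun i j : Fin N =>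
    if (i:ℕ) = (j:ℕ) then (1:ℝ) else if (i:ℕ) = (j:ℕ) + 1 then -(δ j / δ i) else 0) with hG_def
  have hG : ∀ i j : Fin N, G i j =
      if (i:ℕ) = (j:ℕ) then (1:ℝ) else if (i:ℕ) = (j:ℕ) + 1 then -(δ j / δ i) else 0 :=
    fun i j => rfl
  have hGF : G * F = 1 := by
    ext i k
    rw [Matrix.mul_apply]
    rcases Nat.eq_zero_or_pos (i:ℕ) with hi | hi
    · rw [Finset.sum_eq_single i]
      · have hGii : G i i = 1 := by rw [hG, if_pos rfl]
        rw [hGii, one_mul, hF' i k]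
        by_cases hk : (k:ℕ) ≤ (i:ℕ)
        · have hki : k = i := Fin.ext (by omega)
          rw [if_pos hk, hki, div_self (hδpos i i.isLt).ne', Matrix.one_apply_eq]
        · rw [if_neg hk, Matrix.one_apply_ne (fun hc => hk (by rw [hc]))]
      · intro b _ hb
        have hGib : G i b = 0 := by
          rw [hG, if_neg (fun hc => hb (Fin.ext hc.symm)), if_neg (by omega)]
        rw [hGib, zero_mul]
      · intro h; exact absurd (Finset.mem_univ i) h
    · obtain ⟨m, hm⟩ : ∃ m, (i:ℕ) = m + 1 := ⟨(i:ℕ) - 1, by omega⟩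
      have hmN : m < N := by have := i.isLt; omega
      set p : Fin N := ⟨m, hmN⟩ with hp_def
      have hpi : p ≠ i := by
        intro hc; have : (p:ℕ) = (i:ℕ) := by rw [hc]
        simp [hp_def] at this; omega
      have hsum : ∑ j, G i j * F j k = G i p * F p k + G i i * F i k := by
        rw [← Finset.sum_subset (Finset.subset_univ {p, i})]
        · rw [Finset.sum_pair hpi]
        · intro b _ hb
          simp only [Finset.mem_insert, Finset.mem_singleton, not_or] at hb
          have hGib : G i b = 0 := by
            rw [hG, if_neg (fun hc => hb.2 (Fin.ext hc.symm)),
              if_neg (fun hc => hb.1 (Fin.ext (by simp [hp_def]; omega)))]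
          rw [hGib, zero_mul]
      rw [hsum]
      have hGip : G i p = -(δ m / δ (m+1)) := by
        rw [hG, if_neg (by simp [hp_def]; omega), if_pos (by simp [hp_def]; omega)]
        simp [hp_def, hm]
      have hGii : G i i = 1 := by rw [hG, if_pos rfl]
      have hδm : δ m ≠ 0 := (hδpos m hmN).ne'
      have hδm1 : δ (m+1) ≠ 0 := by
        have := hδpos (m+1) (by omega); exact this.ne'
      by_cases hk1 : (k:ℕ) ≤ m
      · have hFpk : F p k = δ k / δ m := by
          rw [hF' p k, if_pos (by simp [hp_def]; omega)]
        have hFik : F i k = δ k / δ (m+1) := by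
          rw [hF' i k, if_pos (by omega), hm]
        have hik : i ≠ k := fun hc => by rw [← hc] at hk1; omega
        rw [hFpk, hFik, hGip, hGii, Matrix.one_apply_ne hik]
        field_simp
        ring
      · by_cases hk2 : (k:ℕ) = m + 1
        · have hki : k = i := Fin.ext (by omega)
          have hFpk : F p k = 0 := by
            rw [hF' p k, if_neg (by simp [hp_def]; omega)]
          have hFik : F i k = 1 := by
            rw [hF' i k, if_pos (by omega), hki, div_self (hδpos i i.isLt).ne']
          rw [hFpk, hFik, hGii, hki, Matrix.one_apply_eq]
          ring
        · have hik : i ≠ k := fun hc => by rw [← hc] at hk2; omega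
          have hFpk : F p k = 0 := by
            rw [hF' p k, if_neg (by simp [hp_def]; omega)]
          have hFik : F i k = 0 := by
            rw [hF' i k, if_neg (by omega)]
          rw [hFpk, hFik, Matrix.one_apply_ne hik]
          ring
  have hFinv : F⁻¹ = G := Matrix.inv_eq_left_inv hGF
  -- bounds for G
  have hsub_le : ∀ j i : Fin N, (i:ℕ) = (j:ℕ) + 1 → δ (j:ℕ) / δ (i:ℕ) ≤ 1 / s := by
    intro j i hij
    have h := hratio j i (by omega) i.isLt
    rwa [show (i:ℕ) - (j:ℕ) - 1 = 0 by omega, hg_zero] at h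
  have hrowG : ∀ i : Fin N, ∑ j, |G i j| ≤ 1 + 1 / s := by
    intro i
    have point : ∀ j : Fin N, |G i j| ≤
        (if j = i then (1:ℝ) else 0) + (if (i:ℕ) = (j:ℕ) + 1 then 1 / s else 0) := by
      intro j
      by_cases h1 : (i:ℕ) = (j:ℕ)
      · rw [hG, if_pos h1, if_pos (Fin.ext h1.symm), if_neg (by omega)]
        norm_num
      · by_cases h2 : (i:ℕ) = (j:ℕ) + 1
        · rw [hG, if_neg h1, if_pos h2, if_neg (fun hc => by rw [hc] at h2; omega),
            if_pos h2, abs_neg, abs_of_nonneg (by positivity)]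
          simpa using hsub_le j i h2
        · rw [hG, if_neg h1, if_neg h2, if_neg (fun hc => h1 (by rw [hc])), if_neg h2]
          norm_num
    calc ∑ j, |G i j| ≤ ∑ j, ((if j = i then (1:ℝ) else 0) +
          (if (i:ℕ) = (j:ℕ) + 1 then 1 / s else 0)) := Finset.sum_le_sum fun j _ => point j
      _ = 1 + ∑ j : Fin N, (if (i:ℕ) = (j:ℕ) + 1 then 1 / s else 0) := by
          rw [Finset.sum_add_distrib, Finset.sum_ite_eq' Finset.univ i (fun _ => (1:ℝ)),
            if_pos (Finset.mem_univ i)]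
      _ ≤ 1 + 1 / s := by
          gcongr
          apply sum_ite_le_aux (by positivity)
          intro a b ha hb; exact Fin.ext (by omega)
  have hcolG : ∀ j : Fin N, ∑ i, |G i j| ≤ 1 + 1 / s := by
    intro j
    have point : ∀ i : Fin N, |G i j| ≤
        (if i = j then (1:ℝ) else 0) + (if (i:ℕ) = (j:ℕ) + 1 then 1 / s else 0) := by
      intro i
      by_cases h1 : (i:ℕ) = (j:ℕ)
      · rw [hG, if_pos h1, if_pos (Fin.ext h1), if_neg (by omega)]
        norm_num
      · by_cases h2 : (i:ℕ) = (j:ℕ) + 1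
        · rw [hG, if_neg h1, if_pos h2, if_neg (fun hc => by rw [hc] at h2; omega),
            if_pos h2, abs_neg, abs_of_nonneg (by positivity)]
          simpa using hsub_le j i h2
        · rw [hG, if_neg h1, if_neg h2, if_neg (fun hc => h1 (by rw [hc])), if_neg h2]
          norm_num
    calc ∑ i, |G i j| ≤ ∑ i, ((if i = j then (1:ℝ) else 0) +
          (if (i:ℕ) = (j:ℕ) + 1 then 1 / s else 0)) := Finset.sum_le_sum fun i _ => point i
      _ = 1 + ∑ i : Fin N, (if (i:ℕ) = (j:ℕ) + 1 then 1 / s else 0) := by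
          rw [Finset.sum_add_distrib, Finset.sum_ite_eq' Finset.univ j (fun _ => (1:ℝ)),
            if_pos (Finset.mem_univ j)]
      _ ≤ 1 + 1 / s := by
          gcongr
          apply sum_ite_le_aux (by positivity)
          intro a b ha hb; exact Fin.ext (by omega)
  have hB0' : (0:ℝ) ≤ 1 + 1 / s := by positivity
  have part2 : matOpNorm F⁻¹ ≤ 1 + 1 / s := by
    rw [hFinv]
    have h := schur_bound G hB0' hB0' hrowG hcolG
    rwa [Real.sqrt_mul_self hB0'] at h
  exact ⟨part1, part2⟩
end

section
/- For θ ∈ (0, π/2) and n, N ∈ N, let F̃ be the N×N lower triangular matrix with entries f̃_{i1} = (cos θ)^{i−1}/√n for all i ≤ N and f̃_{ij} = sin θ · (cos θ)^{i−j}/√n for 2 ≤ j ≤ i. Then sin θ/√n ≤ ‖F̃‖ ≤ 1/((1 − cos θ)√n), ‖F̃^{-1}‖ ≤ (1 + cos θ)√n/sin θ, and hence the condition number satisfies ‖F̃‖·‖F̃^{-1}‖ ≤ (1 + cos θ)/(sin θ (1 − cos θ)). -/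
open Finset Matrix Real
open scoped Matrix.Norms.L2Operator

theorem matOpNorm_eq_l2_opNorm {m n : ℕ} (A : Matrix (Fin m) (Fin n) ℝ) :
    matOpNorm A = ‖A‖ :=
  rfl

theorem Finset.sum_pow_le_inv_one_sub_of_injOn {ι : Type*} {c : ℝ} (hc0 : 0 ≤ c) (hc1 : c < 1)
    (s : Finset ι) {e : ι → ℕ} (he : Set.InjOn e s) :
    ∑ x ∈ s, c ^ e x ≤ (1 - c)⁻¹ := by
  classical
  rw [← sum_image he, ← tsum_geometric_of_lt_one hc0 hc1]
  exact (summable_geometric_of_lt_one hc0 hc1).sum_le_tsum _ fun _ _ => by positivity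

namespace Matrix

def lowerShift (R : Type*) [Zero R] [One R] (N : ℕ) : Matrix (Fin N) (Fin N) R :=
  of fun i j => if (j : ℕ) + 1 = i then 1 else 0

def geomToeplitz {R : Type*} [Monoid R] [Zero R] (c : R) (N : ℕ) : Matrix (Fin N) (Fin N) R :=
  of fun i j => if (j : ℕ) ≤ i then c ^ ((i : ℕ) - j) else 0

theorem lowerShift_mul_apply {R : Type*} [Semiring R] {N : ℕ} (A : Matrix (Fin N) (Fin N) R)
    (i k : Fin N) :
    (lowerShift R N * A) i k = if h : (i : ℕ) = 0 then 0 else A ⟨i - 1, by omega⟩ k := by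
  simp only [mul_apply, lowerShift, of_apply, ite_mul, one_mul, zero_mul]
  split_ifs with h
  · exact sum_eq_zero fun j _ => if_neg (by omega)
  · have hj (j : Fin N) : (j : ℕ) + 1 = i ↔ j = ⟨i - 1, by omega⟩ := by
      rw [Fin.ext_iff]; dsimp only; omega
    simp_rw [hj, Fintype.sum_ite_eq']

theorem one_sub_smul_lowerShift_mul_geomToeplitz {R : Type*} [CommRing R] (c : R) (N : ℕ) :
    (1 - c • lowerShift R N) * geomToeplitz c N = 1 := by
  ext i k
  rw [sub_mul, one_mul, smul_mul, sub_apply, smul_apply, lowerShift_mul_apply, one_apply]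
  simp only [geomToeplitz, of_apply, Fin.ext_iff, smul_eq_mul]
  split_ifs <;> first
    | omega
    | simp [show (i : ℕ) - k = 0 by omega]
    | rw [show (i : ℕ) - k = i - 1 - k + 1 by omega, pow_succ', sub_self]

theorem inv_smul_geomToeplitz_mul_diagonal {K : Type*} [Field K] {N : ℕ} {a : K} (ha : a ≠ 0)
    (c : K) {d : Fin N → K} (hd : ∀ j, d j ≠ 0) :
    (a • (geomToeplitz c N * diagonal d))⁻¹ =
      a⁻¹ • (diagonal d⁻¹ * (1 - c • lowerShift K N)) := by
  refine inv_eq_left_inv ?_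
  calc a⁻¹ • (diagonal d⁻¹ * (1 - c • lowerShift K N)) * (a • (geomToeplitz c N * diagonal d))
      = (a⁻¹ * a) •
          (diagonal d⁻¹ * ((1 - c • lowerShift K N) * geomToeplitz c N) * diagonal d) := by
        rw [smul_mul_smul, Matrix.mul_assoc, Matrix.mul_assoc, Matrix.mul_assoc]
    _ = 1 := by
        rw [inv_mul_cancel₀ ha, one_smul, one_sub_smul_lowerShift_mul_geomToeplitz,
          Matrix.mul_one, diagonal_mul_diagonal, ← diagonal_one]
        exact congrArg diagonal (funext fun j => inv_mul_cancel₀ (hd j))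

variable {𝕜 m n : Type*} [RCLike 𝕜] [Fintype m] [Fintype n] [DecidableEq n]

theorem l2_opNorm_le_sqrt_mul_of_sum_norm_le (A : Matrix m n 𝕜) {R C : ℝ}
    (hR : 0 ≤ R) (hC : 0 ≤ C)
    (hrow : ∀ i, ∑ j, ‖A i j‖ ≤ R) (hcol : ∀ j, ∑ i, ‖A i j‖ ≤ C) :
    ‖A‖ ≤ √(R * C) := by
  refine ContinuousLinearMap.opNorm_le_bound _ (Real.sqrt_nonneg _) fun x => ?_
  rw [← Real.sqrt_sq (norm_nonneg x), ← Real.sqrt_mul' _ (sq_nonneg _),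
    Real.le_sqrt (norm_nonneg _) (by positivity), EuclideanSpace.norm_sq_eq,
    EuclideanSpace.norm_sq_eq, mul_sum]
  have hrow_sq (i : m) : ‖∑ j, A i j * x j‖ ^ 2 ≤ R * ∑ j, ‖A i j‖ * ‖x j‖ ^ 2 := by
    calc ‖∑ j, A i j * x j‖ ^ 2 ≤ (∑ j, ‖A i j‖ * ‖x j‖) ^ 2 := by
          gcongr; exact (norm_sum_le _ _).trans_eq (by simp_rw [norm_mul])
      _ ≤ (∑ j, ‖A i j‖) * ∑ j, ‖A i j‖ * ‖x j‖ ^ 2 :=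
          sum_sq_le_sum_mul_sum_of_sq_le_mul _ (fun _ _ => norm_nonneg _)
            (fun _ _ => by positivity) (fun _ _ => (by ring : _ = _).le)
      _ ≤ R * ∑ j, ‖A i j‖ * ‖x j‖ ^ 2 := by gcongr; exact hrow i
  calc ∑ i, ‖(toEuclideanLin A x) i‖ ^ 2 ≤ ∑ i, R * ∑ j, ‖A i j‖ * ‖x j‖ ^ 2 :=
        sum_le_sum fun i _ => hrow_sq i
    _ = R * ∑ j, (∑ i, ‖A i j‖) * ‖x j‖ ^ 2 := by
        rw [← mul_sum, sum_comm]; simp_rw [sum_mul]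
    _ ≤ ∑ j, R * C * ‖x j‖ ^ 2 := by
        rw [mul_sum]
        refine sum_le_sum fun j _ => ?_
        rw [mul_assoc]
        gcongr
        exact hcol j

theorem norm_apply_le_l2_opNorm (A : Matrix m n 𝕜) (i : m) (j : n) : ‖A i j‖ ≤ ‖A‖ := by
  have h := A.l2_opNorm_mulVec (WithLp.toLp _ (Pi.single j 1))
  simp only [mulVec_single, MulOpposite.op_one, one_smul, PiLp.continuousLinearEquiv_symm_apply,
    EuclideanSpace.norm_eq, col_apply, PiLp.toLp_single, PiLp.norm_single, norm_one,
    mul_one] at h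
  refine le_trans (Real.le_sqrt_of_sq_le ?_) h
  exact single_le_sum (f := fun i => ‖A i j‖ ^ 2) (fun _ _ => by positivity) (mem_univ i)

theorem l2_opNorm_one_le : ‖(1 : Matrix n n 𝕜)‖ ≤ 1 := by
  rw [← diagonal_one, l2_opNorm_diagonal]
  exact (pi_norm_le_iff_of_nonneg zero_le_one).mpr fun _ => norm_one.le

theorem l2_opNorm_lowerShift_le (N : ℕ) : ‖lowerShift 𝕜 N‖ ≤ 1 := by
  have hsum (p : Fin N → Fin N → Prop) [DecidableRel p] (hp : ∀ k a b, p a k → p b k → a = b)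
      (k : Fin N) : ∑ j, ‖if p j k then (1 : 𝕜) else 0‖ ≤ 1 := by
    simp only [apply_ite, norm_one, norm_zero, sum_boole, Nat.cast_le_one]
    exact card_le_one.mpr fun a ha b hb => hp k a b (by simpa using ha) (by simpa using hb)
  simpa using l2_opNorm_le_sqrt_mul_of_sum_norm_le (lowerShift 𝕜 N) zero_le_one zero_le_one
    (hsum (fun j i => (j : ℕ) + 1 = i) fun _ _ _ h h' => by omega)
    (hsum (fun i j => (j : ℕ) + 1 = i) fun _ _ _ h h' => by omega)

theorem l2_opNorm_geomToeplitz_le {c : ℝ} (hc0 : 0 ≤ c) (hc1 : c < 1) (N : ℕ) :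
    ‖geomToeplitz c N‖ ≤ (1 - c)⁻¹ := by
  have h : 0 ≤ (1 - c)⁻¹ := by rw [inv_nonneg]; linarith
  have hnorm (i j : Fin N) :
      ‖geomToeplitz c N i j‖ = if (j : ℕ) ≤ i then c ^ ((i : ℕ) - j) else 0 := by
    simp only [geomToeplitz, of_apply]
    split_ifs <;> simp [abs_of_nonneg hc0]
  refine (l2_opNorm_le_sqrt_mul_of_sum_norm_le _ h h (fun i => ?_) (fun j => ?_)).trans_eq
    (Real.sqrt_mul_self h)
  all_goals
    simp only [hnorm, ← sum_filter]
    refine sum_pow_le_inv_one_sub_of_injOn hc0 hc1 _ fun a ha b hb hab => ?_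
    simp only [coe_filter, mem_univ, true_and, Set.mem_ofPred_eq] at ha hb
    omega

theorem l2_opNorm_smul_geomToeplitz_mul_diagonal_le (a : ℝ) {N : ℕ} {c : ℝ} (hc0 : 0 ≤ c)
    (hc1 : c < 1) {d : Fin N → ℝ} {B : ℝ} (hB : 0 ≤ B) (hd : ∀ j, ‖d j‖ ≤ B) :
    ‖a • (geomToeplitz c N * diagonal d)‖ ≤ ‖a‖ * ((1 - c)⁻¹ * B) := by
  rw [norm_smul]
  gcongr
  refine (l2_opNorm_mul _ _).trans (mul_le_mul (l2_opNorm_geomToeplitz_le hc0 hc1 N) ?_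
    (norm_nonneg _) (inv_nonneg.mpr (by linarith)))
  rw [l2_opNorm_diagonal]
  exact (pi_norm_le_iff_of_nonneg hB).mpr hd

theorem l2_opNorm_smul_diagonal_mul_one_sub_smul_lowerShift_le (a : 𝕜) {N : ℕ} {d : Fin N → 𝕜}
    {B : ℝ} (hB : 0 ≤ B) (hd : ∀ j, ‖d j‖ ≤ B) (c : 𝕜) :
    ‖a • (diagonal d * (1 - c • lowerShift 𝕜 N))‖ ≤ ‖a‖ * (B * (1 + ‖c‖)) := by
  rw [norm_smul]
  gcongr
  refine (l2_opNorm_mul _ _).trans (mul_le_mul ?_ ?_ (norm_nonneg _) hB)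
  · rw [l2_opNorm_diagonal]; exact (pi_norm_le_iff_of_nonneg hB).mpr hd
  · refine (norm_sub_le _ _).trans (add_le_add l2_opNorm_one_le ?_)
    rw [norm_smul]
    exact mul_le_of_le_one_right (norm_nonneg c) (l2_opNorm_lowerShift_le N)

end Matrix

def colScale {K : Type*} [Zero K] [One K] (s : K) (N : ℕ) : Fin N → K :=
  fun j => if (j : ℕ) = 0 then 1 else s

theorem colScale_ne_zero {K : Type*} [Field K] {s : K} (hs : s ≠ 0) {N : ℕ} (j : Fin N) :
    colScale s N j ≠ 0 := by
  unfold colScale; split_ifs <;> simp [hs]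

theorem norm_colScale_le_one {s : ℝ} (hs0 : 0 ≤ s) (hs1 : s ≤ 1) {N : ℕ} (j : Fin N) :
    ‖colScale s N j‖ ≤ 1 := by
  unfold colScale; split_ifs <;> simp [abs_of_nonneg hs0, hs1]

theorem norm_inv_colScale_le {s : ℝ} (hs0 : 0 < s) (hs1 : s ≤ 1) {N : ℕ} (j : Fin N) :
    ‖(colScale s N)⁻¹ j‖ ≤ s⁻¹ := by
  rw [Pi.inv_apply]; unfold colScale; split_ifs <;> simp [abs_of_pos hs0, one_le_inv₀ hs0, hs1]

theorem eq_inv_smul_geomToeplitz_mul_diagonal_colScale {K : Type*} [Field K] {N : ℕ}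
    {a c s : K} {F : Matrix (Fin N) (Fin N) K}
    (hF : ∀ i j : Fin N, F i j = if (j : ℕ) = 0 then c ^ (i : ℕ) / a
      else if (j : ℕ) ≤ (i : ℕ) then s * c ^ ((i : ℕ) - (j : ℕ)) / a else 0) :
    F = a⁻¹ • (geomToeplitz c N * diagonal (colScale s N)) := by
  ext i j
  rw [hF]
  simp only [Matrix.smul_apply, mul_diagonal, geomToeplitz, colScale, of_apply, smul_eq_mul]
  split_ifs with hj hji
  · rw [hj, Nat.sub_zero]; ring
  · omega
  · ring
  · simp

theorem sphere_walk_matrix_norm_bounds (θ : ℝ) (hθ : θ ∈ Set.Ioo 0 (Real.pi / 2))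
    (n N : ℕ) (hn : 0 < n) (hN : 0 < N)
    (F : Matrix (Fin N) (Fin N) ℝ)
    (hF : ∀ i j : Fin N, F i j =
      if (j : ℕ) = 0 then Real.cos θ ^ (i : ℕ) / Real.sqrt n
      else if (j : ℕ) ≤ (i : ℕ) then
        Real.sin θ * Real.cos θ ^ ((i : ℕ) - (j : ℕ)) / Real.sqrt n
      else 0) :
    Real.sin θ / Real.sqrt n ≤ matOpNorm F ∧
      matOpNorm F ≤ 1 / ((1 - Real.cos θ) * Real.sqrt n) ∧
      matOpNorm F⁻¹ ≤ (1 + Real.cos θ) * Real.sqrt n / Real.sin θ ∧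
      matOpNorm F * matOpNorm F⁻¹ ≤
        (1 + Real.cos θ) / (Real.sin θ * (1 - Real.cos θ)) := by
  obtain ⟨hθ0, hθ2⟩ := hθ
  have hs : 0 < sin θ := sin_pos_of_mem_Ioo ⟨hθ0, by linarith [pi_pos]⟩
  have hc0 : 0 ≤ cos θ := cos_nonneg_of_mem_Icc ⟨by linarith [pi_pos], hθ2.le⟩
  have hc1 : cos θ < 1 := by nlinarith [sin_sq_add_cos_sq θ, cos_le_one θ]
  have hsqrt : 0 < √(n : ℝ) := by positivity
  have hF_eq := eq_inv_smul_geomToeplitz_mul_diagonal_colScale hF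
  have hF_le : ‖F‖ ≤ 1 / ((1 - cos θ) * √n) := by
    refine (hF_eq ▸ l2_opNorm_smul_geomToeplitz_mul_diagonal_le _ hc0 hc1 zero_le_one
      (norm_colScale_le_one hs.le (sin_le_one θ))).trans_eq ?_
    rw [norm_inv, norm_of_nonneg hsqrt.le]; field_simp
  have hF_inv_le : ‖F⁻¹‖ ≤ (1 + cos θ) * √n / sin θ := by
    rw [hF_eq, inv_smul_geomToeplitz_mul_diagonal (by positivity) _ (colScale_ne_zero hs.ne'),
      inv_inv]
    refine (l2_opNorm_smul_diagonal_mul_one_sub_smul_lowerShift_le _ (by positivity)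
      (norm_inv_colScale_le hs (sin_le_one θ)) _).trans_eq ?_
    rw [norm_of_nonneg hsqrt.le, norm_of_nonneg hc0]; field_simp
  have hF_ge : sin θ / √n ≤ ‖F‖ := by
    have h00 := norm_apply_le_l2_opNorm F ⟨0, hN⟩ ⟨0, hN⟩
    rw [hF, if_pos rfl, pow_zero, norm_of_nonneg (by positivity)] at h00
    exact (div_le_div_of_nonneg_right (sin_le_one θ) hsqrt.le).trans h00
  simp only [matOpNorm_eq_l2_opNorm]
  refine ⟨hF_ge, hF_le, hF_inv_le, ?_⟩
  calc ‖F‖ * ‖F⁻¹‖ ≤ 1 / ((1 - cos θ) * √n) * ((1 + cos θ) * √n / sin θ) :=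
        mul_le_mul hF_le hF_inv_le (norm_nonneg _) (by positivity)
    _ = (1 + cos θ) / (sin θ * (1 - cos θ)) := by field_simp
end

section
/- Let τ, δ ∈ (0,1] and K > 1. Then there exist L > 0 and η > 0 depending only on τ, δ, K such that for every N ≥ Ln the following holds: if A is an N×n random matrix with independent rows R_i satisfying P{⟨R_i, y⟩ < −τ} ≥ δ for every unit vector y ∈ S^{n−1} and every i ≤ N, and F is any N×N random matrix (not necessarily independent of A), then P{∃ y ∈ S^{n−1} : FAy ∈ R₊^N} ≤ exp(−δ²N/4) + P{‖A‖ > K√N} + P{‖F − I‖ > η}. -/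
open MeasureTheory ProbabilityTheory

/-!
Put `η = τ √(δ / 8) / K`. If `F A y ≥ 0` for a unit vector `y` while `‖A‖ ≤ K √N` and
`‖F - 1‖ ≤ η`, pick `c` in an `η`-net of the sphere with `‖y - c‖ ≤ η`. Then
`‖A c - F A y‖ ≤ 2 η K √N`, and every coordinate of `A c` below `-τ` contributes more than `τ²`
to this squared distance, so at most `δ N / 2` coordinates of `A c` are below `-τ`.
For a fixed `c` the coordinates of `A c` fall below `-τ` independently, each with probability at
least `δ`, so by Hoeffding's inequality this has probability at most `exp (-δ² N / 2)`.
A volumetric argument yields a net with at most `(1 + 2 / η) ^ n ≤ exp (δ² N / 4)` points once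
`N ≥ L n`, and a union bound over the net concludes.
-/

open Finset Metric Module
open scoped NNReal ENNReal Matrix

section Packing

variable {E : Type*} [NormedAddCommGroup E] [NormedSpace ℝ E] [FiniteDimensional ℝ E]
  {x : E} {r : ℝ} {ε : ℝ≥0}

lemma Metric.IsSeparated.card_le_of_subset_closedBall {s : Finset E}
    (hs : IsSeparated ε (s : Set E)) (hsx : (s : Set E) ⊆ closedBall x r) (hr : 0 ≤ r)
    (hε : 0 < ε) : (s.card : ℝ) ≤ (1 + 2 * r / ε) ^ finrank ℝ E := by
  borelize E
  set μ : Measure E := Measure.addHaar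
  set d := finrank ℝ E
  have hε' : (0 : ℝ) < ε := hε
  have hvol : ∀ (y : E) {ρ : ℝ}, 0 < ρ → μ (ball y ρ) = ENNReal.ofReal (ρ ^ d) * μ (ball 0 1) :=
    fun y ρ hρ => Measure.addHaar_ball_of_pos μ y hρ
  have hunit₀ : μ (ball 0 1) ≠ 0 := (measure_ball_pos μ _ one_pos).ne'
  have hunit : μ (ball 0 1) ≠ ∞ := measure_ball_lt_top.ne
  have hdisj : (s : Set E).PairwiseDisjoint fun y => ball y (ε / 2) := by
    intro a ha b hb hab
    refine ball_disjoint_ball ?_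
    have hab : (ε : ℝ≥0∞) < edist a b := hs ha hb hab
    rw [edist_nndist, ENNReal.coe_lt_coe] at hab
    exact (add_halves (ε : ℝ)).le.trans hab.le
  have hsub : ⋃ y ∈ s, ball y (ε / 2) ⊆ ball x (r + ε / 2) := by
    refine Set.iUnion₂_subset fun y hy => ball_subset_ball' ?_
    linarith [mem_closedBall.mp (hsx hy)]
  have hmeas :
      (s.card : ℝ≥0∞) * ENNReal.ofReal ((ε / 2) ^ d) ≤ ENNReal.ofReal ((r + ε / 2) ^ d) := by
    rw [← ENNReal.mul_le_mul_iff_left hunit₀ hunit]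
    calc (s.card : ℝ≥0∞) * ENNReal.ofReal ((ε / 2) ^ d) * μ (ball 0 1)
        = ∑ y ∈ s, μ (ball y (ε / 2)) := by
          simp only [hvol _ (half_pos hε'), sum_const, nsmul_eq_mul, mul_assoc]
      _ = μ (⋃ y ∈ s, ball y (ε / 2)) :=
          (measure_biUnion_finset hdisj fun _ _ => measurableSet_ball).symm
      _ ≤ μ (ball x (r + ε / 2)) := measure_mono hsub
      _ = _ := hvol x (by positivity)
  rw [← ENNReal.ofReal_natCast, ← ENNReal.ofReal_mul (by positivity),
    ENNReal.ofReal_le_ofReal_iff (by positivity), ← le_div_iff₀ (by positivity), ← div_pow] at hmeas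
  refine hmeas.trans_eq ?_
  congr 1
  field_simp
  ring

lemma Metric.IsSeparated.encard_le_of_subset_closedBall {C : Set E} (hC : IsSeparated ε C)
    (hCx : C ⊆ closedBall x r) (hr : 0 ≤ r) (hε : 0 < ε) :
    C.encard ≤ ⌊(1 + 2 * r / ε) ^ finrank ℝ E⌋₊ := by
  by_contra! h
  obtain ⟨t, htC, ht⟩ := Set.exists_subset_encard_eq (Order.add_one_le_of_lt h)
  have htfin : t.Finite := Set.finite_of_encard_eq_coe ht
  have hcard := IsSeparated.card_le_of_subset_closedBall (s := htfin.toFinset)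
    (by rw [htfin.coe_toFinset]; exact hC.subset htC)
    (by rw [htfin.coe_toFinset]; exact htC.trans hCx) hr hε
  rw [htfin.encard_eq_coe_toFinset_card] at ht
  have : htfin.toFinset.card = ⌊(1 + 2 * r / ε) ^ finrank ℝ E⌋₊ + 1 := by exact_mod_cast ht
  rw [this, Nat.cast_add_one] at hcard
  exact (Nat.lt_floor_add_one _).not_ge hcard

lemma Metric.packingNumber_le_of_subset_closedBall {A : Set E} (hA : A ⊆ closedBall x r)
    (hr : 0 ≤ r) (hε : 0 < ε) :
    packingNumber ε A ≤ ⌊(1 + 2 * r / ε) ^ finrank ℝ E⌋₊ :=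
  iSup₂_le fun _ hCA => iSup_le fun hC => hC.encard_le_of_subset_closedBall (hCA.trans hA) hr hε

lemma Metric.exists_finset_isCover_card_le_of_subset_closedBall {A : Set E}
    (hA : A ⊆ closedBall x r) (hr : 0 ≤ r) (hε : 0 < ε) :
    ∃ C : Finset E, ↑C ⊆ A ∧ IsCover ε A C ∧
      (C.card : ℝ) ≤ (1 + 2 * r / ε) ^ finrank ℝ E := by
  have hcov : coveringNumber ε A ≤ ⌊(1 + 2 * r / ε) ^ finrank ℝ E⌋₊ :=
    (coveringNumber_le_packingNumber ε A).trans (packingNumber_le_of_subset_closedBall hA hr hε)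
  have hne : coveringNumber ε A ≠ ⊤ := ne_top_of_le_ne_top (ENat.natCast_ne_top _) hcov
  have hfin : (minimalCover ε A).Finite := finite_minimalCover
  refine ⟨hfin.toFinset, by simpa using minimalCover_subset,
    by simpa using isCover_minimalCover hne, ?_⟩
  rw [← encard_minimalCover hne, hfin.encard_eq_coe_toFinset_card] at hcov
  exact (Nat.cast_le.mpr (by exact_mod_cast hcov)).trans (Nat.floor_le (by positivity))

end Packing

lemma card_lt_neg_mul_sq_le_norm_sub_sq {ι : Type*} [Fintype ι] {τ : ℝ} (hτ : 0 ≤ τ)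
    (v w : EuclideanSpace ℝ ι) (hw : ∀ i, 0 ≤ w i) :
    #{i | v i < -τ} * τ ^ 2 ≤ ‖v - w‖ ^ 2 := by
  rw [EuclideanSpace.norm_eq, Real.sq_sqrt (by positivity), ← nsmul_eq_mul, ← sum_const]
  refine (sum_le_sum fun i hi => ?_).trans
    (sum_le_sum_of_subset_of_nonneg (filter_subset _ _) fun i _ _ => by positivity)
  have hvi : v i < -τ := (mem_filter.mp hi).2
  rw [Real.norm_eq_abs, sq_abs, PiLp.sub_apply]
  nlinarith [hw i]

lemma norm_mulVec_le_matOpNorm_mul {m n : ℕ} (A : Matrix (Fin m) (Fin n) ℝ)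
    (v : EuclideanSpace ℝ (Fin n)) :
    ‖(WithLp.toLp 2 (A *ᵥ v) : EuclideanSpace ℝ (Fin m))‖ ≤ matOpNorm A * ‖v‖ :=
  (LinearMap.toContinuousLinearMap (Matrix.toEuclideanLin A)).le_opNorm v

lemma card_mulVec_lt_neg_mul_sq_le {m n : ℕ} {τ : ℝ} (hτ : 0 ≤ τ)
    (A : Matrix (Fin m) (Fin n) ℝ) (F : Matrix (Fin m) (Fin m) ℝ)
    {y y' : EuclideanSpace ℝ (Fin n)} (hpos : ∀ i, 0 ≤ ((F * A) *ᵥ y) i) :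
    #{i | (A *ᵥ y') i < -τ} * τ ^ 2 ≤
      (matOpNorm A * ‖y' - y‖ + matOpNorm (F - 1) * (matOpNorm A * ‖y‖)) ^ 2 := by
  let toE : (Fin m → ℝ) → EuclideanSpace ℝ (Fin m) := WithLp.toLp 2
  have hdiff : toE (A *ᵥ y') - toE ((F * A) *ᵥ y) =
      toE (A *ᵥ (y' - y)) - toE ((F - 1) *ᵥ (A *ᵥ y)) := by
    ext i
    simp [toE, Matrix.sub_mulVec, Matrix.mulVec_sub, ← Matrix.mulVec_mulVec]
  have hnorm : ‖toE (A *ᵥ y') - toE ((F * A) *ᵥ y)‖ ≤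
      matOpNorm A * ‖y' - y‖ + matOpNorm (F - 1) * (matOpNorm A * ‖y‖) := by
    rw [hdiff]
    refine (norm_sub_le _ _).trans (add_le_add (norm_mulVec_le_matOpNorm_mul A (y' - y)) ?_)
    exact (norm_mulVec_le_matOpNorm_mul (F - 1) (toE (A *ᵥ y))).trans
      (mul_le_mul_of_nonneg_left (norm_mulVec_le_matOpNorm_mul A y) (norm_nonneg _))
  have hcount := card_lt_neg_mul_sq_le_norm_sub_sq hτ (toE (A *ᵥ y')) (toE ((F * A) *ᵥ y)) hpos
  exact hcount.trans (pow_le_pow_left₀ (norm_nonneg _) hnorm 2)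

lemma card_mulVec_lt_neg_le_of_dist_le {m n : ℕ} {τ δ K : ℝ} (hτ : 0 < τ) (hδ : 0 ≤ δ) (hK : 0 < K)
    {A : Matrix (Fin m) (Fin n) ℝ} {F : Matrix (Fin m) (Fin m) ℝ}
    (hA : matOpNorm A ≤ K * √m) (hF : matOpNorm (F - 1) ≤ τ * √(δ / 8) / K)
    {y c : EuclideanSpace ℝ (Fin n)} (hy : ‖y‖ = 1) (hyc : dist y c ≤ τ * √(δ / 8) / K)
    (hpos : ∀ i, 0 ≤ ((F * A) *ᵥ y) i) :
    (#{i | (A *ᵥ c) i < -τ} : ℝ) ≤ δ * m / 2 := by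
  set η := τ * √(δ / 8) / K
  have hη : 0 ≤ η := by positivity
  have hAn : 0 ≤ matOpNorm A := norm_nonneg _
  have hFn : 0 ≤ matOpNorm (F - 1) := norm_nonneg _
  have hbound : matOpNorm A * ‖c - y‖ + matOpNorm (F - 1) * (matOpNorm A * ‖y‖) ≤
      2 * η * (K * √m) := by
    rw [hy, mul_one, ← dist_eq_norm, dist_comm]
    nlinarith [mul_le_mul hA hyc dist_nonneg (by positivity), mul_le_mul hF hA hAn hη]
  have hsq : (2 * η * (K * √m)) ^ 2 = δ * m / 2 * τ ^ 2 := by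
    simp only [η, mul_pow, div_pow, Real.sq_sqrt (by positivity : 0 ≤ δ / 8),
      Real.sq_sqrt (Nat.cast_nonneg m)]
    field_simp
    ring
  have := (card_mulVec_lt_neg_mul_sq_le hτ.le A F (y' := c) hpos).trans
    (pow_le_pow_left₀ (by positivity) hbound 2)
  rw [hsq] at this
  exact le_of_mul_le_mul_right this (pow_pos hτ 2)

lemma measureReal_card_mem_le_le_exp {Ω ι α : Type*} [MeasurableSpace Ω] {μ : Measure Ω}
    [IsProbabilityMeasure μ] [Fintype ι] [MeasurableSpace α] {X : ι → Ω → α} {S : ι → Set α}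
    [∀ i, DecidablePred (· ∈ S i)]
    (hX : ∀ i, Measurable (X i)) (hind : iIndepFun X μ)
    (hS : ∀ i, MeasurableSet (S i)) {δ t : ℝ} (hδ : ∀ i, δ ≤ μ.real (X i ⁻¹' S i))
    (ht : t ≤ δ * Fintype.card ι) :
    μ.real {ω | (#{i | X i ω ∈ S i} : ℝ) ≤ t} ≤
      Real.exp (-2 * (δ * Fintype.card ι - t) ^ 2 / Fintype.card ι) := by
  set p : ι → ℝ := fun i => μ.real (X i ⁻¹' S i)
  set g : ι → α → ℝ := fun i a => -((S i).indicator 1 a - p i)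
  have hg : ∀ i, Measurable (g i) := fun i =>
    ((measurable_one.indicator (hS i)).sub_const _).neg
  have hZ : ∀ i, HasSubgaussianMGF (g i ∘ X i) ((‖(1 : ℝ) - 0‖₊ / 2) ^ 2) μ := by
    intro i
    have hY : Measurable fun ω => (S i).indicator (1 : α → ℝ) (X i ω) :=
      (measurable_one.indicator (hS i)).comp (hX i)
    have hmean : μ[fun ω => (S i).indicator (1 : α → ℝ) (X i ω)] = p i :=
      integral_indicator_one ((hX i) (hS i))
    have hIcc : ∀ᵐ ω ∂μ, (S i).indicator (1 : α → ℝ) (X i ω) ∈ Set.Icc (0 : ℝ) 1 :=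
      ae_of_all _ fun ω => by by_cases h : X i ω ∈ S i <;> simp [h]
    have hsub := (hasSubgaussianMGF_of_mem_Icc hY.aemeasurable hIcc).neg
    rwa [hmean] at hsub
  have hsum := HasSubgaussianMGF.measure_sum_ge_le_of_iIndepFun (hind.comp g hg) (s := univ)
    (fun i _ => hZ i) (sub_nonneg.mpr ht)
  refine (measureReal_mono fun ω hω => ?_).trans (hsum.trans_eq ?_)
  · have hcount : ∑ i, g i (X i ω) = ∑ i, p i - #{i | X i ω ∈ S i} := by
      simp only [g, Set.indicator_apply, Pi.one_apply, neg_sub, sum_sub_distrib, sum_boole]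
    have hp : δ * Fintype.card ι ≤ ∑ i, p i := by
      simpa [mul_comm] using sum_le_sum fun i (_ : i ∈ univ) => hδ i
    simp only [Set.mem_ofPred_eq, Function.comp_apply, hcount] at hω ⊢
    linarith
  · simp only [sub_zero, nnnorm_one, sum_const, card_univ, nsmul_eq_mul]
    push_cast
    ring_nf

lemma measureReal_card_mulVec_lt_neg_le_le {Ω : Type*} [MeasurableSpace Ω] {μ : Measure Ω}
    [IsProbabilityMeasure μ] {m n : ℕ} {A : Ω → Matrix (Fin m) (Fin n) ℝ}
    (hA : ∀ i j, Measurable fun ω => A ω i j) (hind : iIndepFun (fun i ω => A ω i) μ)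
    {τ δ : ℝ} (hδ0 : 0 ≤ δ) (c : EuclideanSpace ℝ (Fin n))
    (hδ : ∀ i, δ ≤ μ.real {ω | (A ω *ᵥ c) i < -τ}) :
    μ.real {ω | (#{i | (A ω *ᵥ c) i < -τ} : ℝ) ≤ δ * m / 2} ≤ Real.exp (-(δ ^ 2 * m / 2)) := by
  have hS : MeasurableSet {v : Fin n → ℝ | v ⬝ᵥ c < -τ} :=
    measurableSet_lt (by fun_prop) measurable_const
  have := measureReal_card_mem_le_le_exp (S := fun _ => {v | v ⬝ᵥ c < -τ})
    (fun i => measurable_pi_lambda _ (hA i)) hind (fun _ => hS) hδ (t := δ * m / 2)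
    (by simp only [Fintype.card_fin]; linarith [mul_nonneg hδ0 (Nat.cast_nonneg (α := ℝ) m)])
  refine this.trans_eq ?_
  rcases eq_or_ne m 0 with rfl | hm
  · simp
  · simp only [Fintype.card_fin]
    congr 1
    field_simp
    ring

lemma measure_biUnion_card_mulVec_lt_neg_le_le {Ω : Type*} [MeasurableSpace Ω]
    {μ : Measure Ω} [IsProbabilityMeasure μ] {m n : ℕ} {A : Ω → Matrix (Fin m) (Fin n) ℝ}
    (hA : ∀ i j, Measurable fun ω => A ω i j) (hind : iIndepFun (fun i ω => A ω i) μ)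
    {τ δ : ℝ} (hδ0 : 0 ≤ δ) (C : Finset (EuclideanSpace ℝ (Fin n)))
    (hδ : ∀ c ∈ C, ∀ i, δ ≤ μ.real {ω | (A ω *ᵥ c) i < -τ}) :
    μ (⋃ c ∈ C, {ω | (#{i | (A ω *ᵥ c) i < -τ} : ℝ) ≤ δ * m / 2}) ≤
      ENNReal.ofReal (C.card * Real.exp (-(δ ^ 2 * m / 2))) := by
  refine (measure_biUnion_finset_le _ _).trans ((sum_le_card_nsmul _ _
    (ENNReal.ofReal (Real.exp (-(δ ^ 2 * m / 2)))) fun c hc => ?_).trans ?_)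
  · exact (ofReal_measureReal (measure_ne_top _ _)).ge.trans
      (ENNReal.ofReal_le_ofReal (measureReal_card_mulVec_lt_neg_le_le hA hind hδ0 c (hδ c hc)))
  · rw [nsmul_eq_mul, ← ENNReal.ofReal_natCast, ← ENNReal.ofReal_mul (Nat.cast_nonneg _)]

lemma setOf_exists_nonneg_mulVec_subset {Ω : Type*} {m n : ℕ} {τ δ K : ℝ} (hτ : 0 < τ)
    (hδ : 0 ≤ δ) (hK : 0 < K) (A : Ω → Matrix (Fin m) (Fin n) ℝ)
    (F : Ω → Matrix (Fin m) (Fin m) ℝ) {C : Set (EuclideanSpace ℝ (Fin n))}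
    (hC : sphere 0 1 ⊆ ⋃ c ∈ C, closedBall c (τ * √(δ / 8) / K)) :
    {ω | ∃ y : EuclideanSpace ℝ (Fin n), ‖y‖ = 1 ∧ ∀ i, 0 ≤ ((F ω * A ω) *ᵥ y) i} ⊆
      (⋃ c ∈ C, {ω | (#{i | (A ω *ᵥ c) i < -τ} : ℝ) ≤ δ * m / 2}) ∪
        {ω | K * √m < matOpNorm (A ω)} ∪ {ω | τ * √(δ / 8) / K < matOpNorm (F ω - 1)} := by
  rintro ω ⟨y, hy, hpos⟩
  by_contra h
  simp only [Set.mem_union, not_or, Set.mem_ofPred_eq, not_lt] at h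
  obtain ⟨⟨hnet, hA⟩, hF⟩ := h
  obtain ⟨c, hc, hyc⟩ := Set.mem_iUnion₂.mp (hC (mem_sphere_zero_iff_norm.mpr hy))
  exact hnet (Set.mem_biUnion hc (card_mulVec_lt_neg_le_of_dist_le hτ hδ hK hA hF hy hyc hpos))

lemma pow_mul_exp_le_exp_of_mul_log_le {b δ N : ℝ} {n : ℕ} (hb : 0 < b) (hδ : 0 < δ)
    (h : 4 * Real.log b / δ ^ 2 * n ≤ N) :
    b ^ n * Real.exp (-(δ ^ 2 * N / 2)) ≤ Real.exp (-δ ^ 2 * N / 4) := by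
  rw [div_mul_eq_mul_div, div_le_iff₀ (by positivity)] at h
  rw [← Real.exp_log hb, ← Real.exp_nat_mul, ← Real.exp_add, Real.exp_le_exp]
  linarith

theorem escape_theorem_for_general_random_matrices
    (τ δ K : ℝ) (hτ : τ ∈ Set.Ioc (0 : ℝ) 1) (hδ : δ ∈ Set.Ioc (0 : ℝ) 1) (hK : 1 < K) :
    ∃ L η : ℝ, 0 < L ∧ 0 < η ∧
      ∀ (n N : ℕ), L * n ≤ (N : ℝ) →
        ∀ (Ω : Type) (_ : MeasurableSpace Ω) (μ : Measure Ω), IsProbabilityMeasure μ →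
          ∀ A : Ω → Matrix (Fin N) (Fin n) ℝ, (∀ i j, Measurable fun ω => A ω i j) →
            iIndepFun (fun (i : Fin N) (ω : Ω) => A ω i) μ →
            (∀ y : EuclideanSpace ℝ (Fin n), ‖y‖ = 1 → ∀ i : Fin N,
              δ ≤ (μ {ω | (∑ j, A ω i j * y j) < -τ}).toReal) →
            ∀ F : Ω → Matrix (Fin N) (Fin N) ℝ, (∀ i j, Measurable fun ω => F ω i j) →
              μ {ω | ∃ y : EuclideanSpace ℝ (Fin n), ‖y‖ = 1 ∧
                  ∀ i : Fin N, 0 ≤ (F ω * A ω).mulVec y i} ≤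
                ENNReal.ofReal (Real.exp (-δ ^ 2 * N / 4)) +
                  μ {ω | K * Real.sqrt N < matOpNorm (A ω)} +
                  μ {ω | η < matOpNorm (F ω - 1)} := by
  obtain ⟨hτ0, -⟩ := hτ
  obtain ⟨hδ0, -⟩ := hδ
  have hK0 : 0 < K := zero_lt_one.trans hK
  set η := τ * √(δ / 8) / K
  have hη : 0 < η := by positivity
  have hlog : 0 < Real.log (1 + 2 / η) := Real.log_pos (by simp [hη])
  refine ⟨4 * Real.log (1 + 2 / η) / δ ^ 2, η, by positivity, hη, ?_⟩
  intro n N hLn Ω _ μ _ A hA hind hrow F _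
  obtain ⟨C, hCS, hC, hCcard⟩ := exists_finset_isCover_card_le_of_subset_closedBall
    (sphere_subset_closedBall (x := (0 : EuclideanSpace ℝ (Fin n))) (ε := 1)) zero_le_one
    (ε := ⟨η, hη.le⟩) hη
  have hsub := setOf_exists_nonneg_mulVec_subset hτ0 hδ0.le hK0 A F hC.subset_iUnion_closedBall
  have hnet := measure_biUnion_card_mulVec_lt_neg_le_le hA hind hδ0.le C fun c hc =>
    hrow c (mem_sphere_zero_iff_norm.mp (hCS hc))
  have hexp : C.card * Real.exp (-(δ ^ 2 * N / 2)) ≤ Real.exp (-δ ^ 2 * N / 4) := by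
    rw [mul_one, finrank_euclideanSpace_fin] at hCcard
    exact (mul_le_mul_of_nonneg_right hCcard (Real.exp_pos _).le).trans
      (pow_mul_exp_le_exp_of_mul_log_le (by positivity) hδ0 hLn)
  refine (measure_mono hsub).trans ((measure_union_le _ _).trans (add_le_add ?_ le_rfl))
  exact (measure_union_le _ _).trans
    (add_le_add (hnet.trans (ENNReal.ofReal_le_ofReal hexp)) le_rfl)
end

section
/- Let W(j), j ≥ 0, be the standard random walk on Z^n starting at the origin, and let m ≥ n⁴ be an integer. Then the vector X := √(n/m) · W(m) is isotropic (E X = 0 and E X Xᵗ = I), and for every unit vector y ∈ S^{n−1} and every t > 0, P{|⟨X, y⟩| ≥ t} ≤ exp(−2(mn)^{1/4}) + 2 exp(−t²/4). -/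
/-!
For a unit vector `y`, the increments `⟪S k, y⟫` are independent and take the value `± y i` with
probability `1 / (2n)` each. Hence they are centred with `E ⟪S k, y⟫⟪S k, z⟫ = ⟪y, z⟫ / n`, which
gives isotropy, and their moment generating function is `n⁻¹ ∑ i, cosh (l * y i)`. Since
`cosh x ≤ 1 + x²` for `|x| ≤ 1`, this is at most `exp (l² / n)` for `|l| ≤ 1`, so the Chernoff
bound gives `P(|∑_{k<m} ⟪S k, y⟫| ≥ u) ≤ 2 exp (-l u + m l² / n)`. For `u ≤ 2m/n` the choice
`l = u n / (2m)` yields the Gaussian tail `2 exp (-n u² / (4m))`; for `2m/n < u ≤ m` (possible only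
when `n ≥ 3`) the choice `l = 1` yields `2 exp (-m/n) ≤ exp (-2 (mn)^{1/4})` because `m ≥ n⁴`; and
`u > m` exceeds every value of the sum.
-/

open MeasureTheory ProbabilityTheory
open scoped RealInnerProductSpace

namespace Real

lemma cosh_le_one_add_sq {x : ℝ} (hx : |x| ≤ 1) : cosh x ≤ 1 + x ^ 2 := by
  have hx2 : x ^ 2 ≤ 1 := by nlinarith [sq_abs x, abs_nonneg x]
  calc cosh x ≤ exp (x ^ 2 / 2) := cosh_le_exp_half_sq x
    _ ≤ 1 / (1 - x ^ 2 / 2) := exp_bound_div_one_sub_of_interval (by positivity) (by linarith)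
    _ ≤ 1 + x ^ 2 := by
      rw [div_le_iff₀ (by linarith)]
      nlinarith [sq_nonneg x]

lemma two_mul_exp_neg_div_le {m n : ℝ} (hn : 3 ≤ n) (hm : n ^ 4 ≤ m) :
    2 * exp (-(m / n)) ≤ exp (-2 * (m * n) ^ ((1 : ℝ) / 4)) := by
  set b := (m * n) ^ ((1 : ℝ) / 4)
  have hn0 : 0 < n := by linarith
  have hm0 : 0 < m := lt_of_lt_of_le (by positivity) hm
  have hb4 : b ^ 4 = m * n := by
    simp only [b, one_div]
    exact_mod_cast Real.rpow_inv_natCast_pow (by positivity) (by norm_num)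
  have hmn : 256 * n ^ 5 ≤ m ^ 3 := by
    have h7 : 3 ^ 7 * n ^ 5 ≤ n ^ 7 * n ^ 5 := by gcongr
    have h12 : (n ^ 4) ^ 3 ≤ m ^ 3 := pow_le_pow_left₀ (by positivity) hm 3
    nlinarith [pow_pos hn0 5]
  have h2b : 2 * b ≤ m / n / 2 := by
    refine (pow_le_pow_iff_left₀ (by positivity) (by positivity) (by norm_num : 4 ≠ 0)).1 ?_
    rw [mul_pow, hb4, div_pow, div_pow, le_div_iff₀ (by positivity)]
    field_simp
    nlinarith [pow_pos hn0 4, pow_pos hm0 1]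
  have ha : 2 ≤ m / n / 2 := by
    rw [le_div_iff₀ (by norm_num), le_div_iff₀ hn0]
    nlinarith [pow_le_pow_left₀ (by norm_num) hn 3]
  calc 2 * exp (-(m / n)) ≤ exp 1 * exp (-(m / n)) := by
        gcongr; linarith [add_one_le_exp 1]
    _ = exp (1 - m / n) := by rw [← exp_add]; ring_nf
    _ ≤ exp (-2 * b) := by gcongr; linarith

end Real

section SimpleWalkStep

variable {n : ℕ}

lemma EuclideanSpace.single_one_injective :
    Function.Injective (fun i : Fin n => EuclideanSpace.single i (1 : ℝ)) := by
  intro i j h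
  simpa using congrArg (fun v : EuclideanSpace ℝ (Fin n) => v i) h

lemma EuclideanSpace.single_one_ne_neg_single_one (i j : Fin n) :
    EuclideanSpace.single i (1 : ℝ) ≠ -EuclideanSpace.single j 1 := by
  intro h
  have hi := congrArg (fun v : EuclideanSpace ℝ (Fin n) => v i) h
  by_cases hij : i = j <;> simp [hij] at hi
  norm_num at hi

lemma EuclideanSpace.pos_of_norm_eq_one {y : EuclideanSpace ℝ (Fin n)} (hy : ‖y‖ = 1) : 0 < n :=
  Nat.pos_of_ne_zero fun h => by subst h; simp [Subsingleton.elim y 0] at hy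

variable {Ω : Type*} [MeasurableSpace Ω]

structure IsSimpleWalkStep (μ : Measure Ω) (V : Ω → EuclideanSpace ℝ (Fin n)) : Prop where
  measurable : Measurable V
  exists_eq_single : ∀ ω, ∃ i : Fin n,
    V ω = EuclideanSpace.single i 1 ∨ V ω = -EuclideanSpace.single i 1
  measure_eq : ∀ i : Fin n,
    μ {ω | V ω = EuclideanSpace.single i 1} = 1 / (2 * n) ∧
    μ {ω | V ω = -EuclideanSpace.single i 1} = 1 / (2 * n)

namespace IsSimpleWalkStep

variable {μ : Measure Ω} {V : Ω → EuclideanSpace ℝ (Fin n)} (hV : IsSimpleWalkStep μ V)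
include hV

lemma pos_dim [IsProbabilityMeasure μ] : 0 < n := by
  obtain ⟨ω⟩ := nonempty_of_isProbabilityMeasure μ
  obtain ⟨i, -⟩ := hV.exists_eq_single ω
  exact i.pos

lemma norm_eq_one (ω : Ω) : ‖V ω‖ = 1 := by
  obtain ⟨i, hi | hi⟩ := hV.exists_eq_single ω <;> simp [hi]

lemma abs_inner_le (ω : Ω) (y : EuclideanSpace ℝ (Fin n)) : |⟪V ω, y⟫| ≤ ‖y‖ := by
  simpa [hV.norm_eq_one ω] using abs_real_inner_le_norm (V ω) y

lemma measurableSet_eq (v : EuclideanSpace ℝ (Fin n)) : MeasurableSet {ω | V ω = v} :=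
  hV.measurable (measurableSet_singleton v)

variable {G : Type*} [NormedAddCommGroup G]

lemma comp_eq_sum_indicator (F : EuclideanSpace ℝ (Fin n) → G) :
    (fun ω => F (V ω)) = fun ω => ∑ i : Fin n,
      ({ω | V ω = EuclideanSpace.single i 1}.indicator (fun _ => F (EuclideanSpace.single i 1)) ω +
      {ω | V ω = -EuclideanSpace.single i 1}.indicator (fun _ => F (-EuclideanSpace.single i 1)) ω) := by
  ext ω
  simp only [Set.indicator_apply, Set.mem_ofPred_eq]
  obtain ⟨j, hj | hj⟩ := hV.exists_eq_single ω
  · simp [hj, EuclideanSpace.single_one_injective.eq_iff,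
      EuclideanSpace.single_one_ne_neg_single_one]
  · simp [hj, (EuclideanSpace.single_one_ne_neg_single_one _ _).symm,
      EuclideanSpace.single_one_injective.eq_iff]

lemma integrable_indicator_const [IsFiniteMeasure μ] (v : EuclideanSpace ℝ (Fin n)) (c : G) :
    Integrable ({ω | V ω = v}.indicator fun _ => c) μ :=
  (integrable_const c).indicator (hV.measurableSet_eq v)

lemma integrable_comp [IsFiniteMeasure μ] (F : EuclideanSpace ℝ (Fin n) → G) :
    Integrable (fun ω => F (V ω)) μ := by
  rw [hV.comp_eq_sum_indicator]
  exact integrable_finsetSum _ fun i _ =>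
    (hV.integrable_indicator_const _ _).add (hV.integrable_indicator_const _ _)

lemma integral_comp [IsFiniteMeasure μ] [NormedSpace ℝ G] [CompleteSpace G]
    (F : EuclideanSpace ℝ (Fin n) → G) :
    ∫ ω, F (V ω) ∂μ = (2 * n : ℝ)⁻¹ • ∑ i : Fin n,
      (F (EuclideanSpace.single i 1) + F (-EuclideanSpace.single i 1)) := by
  have hreal (v) (hv : μ {ω | V ω = v} = 1 / (2 * n)) :
      μ.real {ω | V ω = v} = (2 * n : ℝ)⁻¹ := by
    simp [measureReal_def, hv]
  rw [hV.comp_eq_sum_indicator, integral_finsetSum _ fun i _ =>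
    (hV.integrable_indicator_const _ _).add (hV.integrable_indicator_const _ _), Finset.smul_sum]
  refine Finset.sum_congr rfl fun i _ => ?_
  rw [integral_add (hV.integrable_indicator_const _ _) (hV.integrable_indicator_const _ _),
    integral_indicator_const _ (hV.measurableSet_eq _),
    integral_indicator_const _ (hV.measurableSet_eq _),
    hreal _ (hV.measure_eq i).1, hreal _ (hV.measure_eq i).2, smul_add]

variable [IsFiniteMeasure μ]

lemma integral_eq_zero : ∫ ω, V ω ∂μ = 0 := by
  simpa using hV.integral_comp id

lemma integral_inner_eq_zero (y : EuclideanSpace ℝ (Fin n)) : ∫ ω, ⟪V ω, y⟫ ∂μ = 0 := by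
  rw [hV.integral_comp fun v => ⟪v, y⟫]
  simp

lemma integral_inner_mul_inner (y z : EuclideanSpace ℝ (Fin n)) :
    ∫ ω, ⟪V ω, y⟫ * ⟪V ω, z⟫ ∂μ = ⟪y, z⟫ / n := by
  rw [hV.integral_comp fun v => ⟪v, y⟫ * ⟪v, z⟫]
  have hyz : ⟪y, z⟫ = ∑ i, y i * z i := by simp [PiLp.inner_apply, mul_comm]
  simp only [hyz, EuclideanSpace.inner_single_left, inner_neg_left, neg_mul_neg, ← two_mul,
    smul_eq_mul, map_one, one_mul, ← Finset.mul_sum]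
  field_simp

lemma memLp_inner (p : ENNReal) (y : EuclideanSpace ℝ (Fin n)) :
    MemLp (fun ω => ⟪V ω, y⟫) p μ :=
  MemLp.of_bound (hV.measurable.inner measurable_const).aestronglyMeasurable ‖y‖ <|
    .of_forall fun ω => hV.abs_inner_le ω y

lemma mgf_inner_le [IsProbabilityMeasure μ] {l : ℝ} {y : EuclideanSpace ℝ (Fin n)}
    (hly : |l| * ‖y‖ ≤ 1) : mgf (fun ω => ⟪V ω, y⟫) μ l ≤ Real.exp (l ^ 2 * ‖y‖ ^ 2 / n) := by
  have hn : (n : ℝ) ≠ 0 := Nat.cast_ne_zero.2 hV.pos_dim.ne'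
  have hly_i (i : Fin n) : |l * y i| ≤ 1 := by
    rw [abs_mul]
    refine le_trans ?_ hly
    gcongr
    simpa using PiLp.norm_apply_le y i
  calc mgf (fun ω => ⟪V ω, y⟫) μ l
      = (n : ℝ)⁻¹ * ∑ i, Real.cosh (l * y i) := by
        rw [mgf, hV.integral_comp fun v => Real.exp (l * ⟪v, y⟫)]
        simp only [EuclideanSpace.inner_single_left, inner_neg_left, map_one, one_mul, smul_eq_mul,
          Real.cosh_eq, ← Finset.sum_div, mul_neg]
        ring
    _ ≤ (n : ℝ)⁻¹ * ∑ i, (1 + (l * y i) ^ 2) := by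
        gcongr with i
        exact Real.cosh_le_one_add_sq (hly_i i)
    _ = 1 + l ^ 2 * ‖y‖ ^ 2 / n := by
        simp only [Finset.sum_add_distrib, mul_pow, ← Finset.mul_sum, EuclideanSpace.norm_sq_eq,
          Real.norm_eq_abs, sq_abs, Finset.sum_const, Finset.card_univ, Fintype.card_fin,
          nsmul_eq_mul, mul_one]
        field_simp
    _ ≤ Real.exp (l ^ 2 * ‖y‖ ^ 2 / n) := by
        linarith [Real.add_one_le_exp (l ^ 2 * ‖y‖ ^ 2 / n)]

end IsSimpleWalkStep
end SimpleWalkStep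

section SimpleWalk

open Finset

variable {Ω ι : Type*} [MeasurableSpace Ω] {μ : Measure Ω} {n : ℕ}
  {S : ι → Ω → EuclideanSpace ℝ (Fin n)}

lemma abs_sum_inner_le (hS : ∀ k, IsSimpleWalkStep μ (S k)) (s : Finset ι) (ω : Ω)
    (y : EuclideanSpace ℝ (Fin n)) : |∑ k ∈ s, ⟪S k ω, y⟫| ≤ #s * ‖y‖ :=
  calc |∑ k ∈ s, ⟪S k ω, y⟫| ≤ ∑ k ∈ s, |⟪S k ω, y⟫| := abs_sum_le_sum_abs _ _
    _ ≤ ∑ k ∈ s, ‖y‖ := sum_le_sum fun k _ => (hS k).abs_inner_le ω y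
    _ = #s * ‖y‖ := by rw [sum_const, nsmul_eq_mul]

variable [IsProbabilityMeasure μ]

lemma integral_sum_inner_mul_sum_inner (hindep : iIndepFun S μ)
    (hS : ∀ k, IsSimpleWalkStep μ (S k)) (s : Finset ι) (y z : EuclideanSpace ℝ (Fin n)) :
    ∫ ω, (∑ k ∈ s, ⟪S k ω, y⟫) * (∑ k ∈ s, ⟪S k ω, z⟫) ∂μ = #s * ⟪y, z⟫ / n := by
  classical
  have hmean (w : EuclideanSpace ℝ (Fin n)) : ∫ ω, ∑ k ∈ s, ⟪S k ω, w⟫ ∂μ = 0 := by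
    rw [integral_finsetSum _ fun k _ => (hS k).integrable_comp fun v => ⟪v, w⟫]
    exact sum_eq_zero fun k _ => (hS k).integral_inner_eq_zero w
  have hcov (j k : ι) : cov[fun ω => ⟪S j ω, y⟫, fun ω => ⟪S k ω, z⟫; μ] =
      if j = k then ⟪y, z⟫ / n else 0 := by
    split_ifs with hjk
    · subst hjk
      simp [covariance, (hS j).integral_inner_eq_zero, (hS j).integral_inner_mul_inner]
    · exact ((hindep.indepFun hjk).comp (measurable_id.inner measurable_const)
        (measurable_id.inner measurable_const)).covariance_eq_zero
        ((hS j).memLp_inner 2 y) ((hS k).memLp_inner 2 z)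
  calc ∫ ω, (∑ k ∈ s, ⟪S k ω, y⟫) * (∑ k ∈ s, ⟪S k ω, z⟫) ∂μ
      = cov[fun ω => ∑ k ∈ s, ⟪S k ω, y⟫, fun ω => ∑ k ∈ s, ⟪S k ω, z⟫; μ] := by
        simp [covariance, hmean]
    _ = ∑ j ∈ s, ∑ k ∈ s, cov[fun ω => ⟪S j ω, y⟫, fun ω => ⟪S k ω, z⟫; μ] :=
        covariance_fun_sum_fun_sum' (fun k _ => (hS k).memLp_inner 2 y)
          (fun k _ => (hS k).memLp_inner 2 z)
    _ = #s * ⟪y, z⟫ / n := by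
        simp [hcov, mul_div_assoc]

lemma measureReal_le_sum_inner_le (hindep : iIndepFun S μ) (hS : ∀ k, IsSimpleWalkStep μ (S k))
    (s : Finset ι) (y : EuclideanSpace ℝ (Fin n)) {l : ℝ} (hl : 0 ≤ l) (hly : l * ‖y‖ ≤ 1)
    (u : ℝ) :
    μ.real {ω | u ≤ ∑ k ∈ s, ⟪S k ω, y⟫} ≤ Real.exp (-l * u + #s * (l ^ 2 * ‖y‖ ^ 2 / n)) := by
  set X : ι → Ω → ℝ := fun k ω => ⟪S k ω, y⟫
  have hXmeas (k : ι) : Measurable (X k) := (hS k).measurable.inner measurable_const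
  have hXindep : iIndepFun X μ :=
    hindep.comp (fun _ v => ⟪v, y⟫) fun _ => measurable_id.inner measurable_const
  have hmgf : mgf (∑ k ∈ s, X k) μ l ≤ Real.exp (#s * (l ^ 2 * ‖y‖ ^ 2 / n)) := by
    calc mgf (∑ k ∈ s, X k) μ l = ∏ k ∈ s, mgf (X k) μ l := hXindep.mgf_sum hXmeas s
      _ ≤ ∏ k ∈ s, Real.exp (l ^ 2 * ‖y‖ ^ 2 / n) :=
        prod_le_prod (fun _ _ => mgf_nonneg) fun k _ =>
          (hS k).mgf_inner_le (by rwa [abs_of_nonneg hl])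
      _ = Real.exp (#s * (l ^ 2 * ‖y‖ ^ 2 / n)) := by rw [prod_const, Real.exp_nat_mul]
  have hint : Integrable (fun ω => Real.exp (l * (∑ k ∈ s, X k) ω)) μ :=
    hXindep.integrable_exp_mul_sum hXmeas fun k _ =>
      (hS k).integrable_comp fun v => Real.exp (l * ⟪v, y⟫)
  calc μ.real {ω | u ≤ ∑ k ∈ s, ⟪S k ω, y⟫}
      ≤ Real.exp (-l * u) * mgf (∑ k ∈ s, X k) μ l := by
        simpa [X, Finset.sum_apply] using measure_ge_le_exp_mul_mgf u hl hint
    _ ≤ Real.exp (-l * u) * Real.exp (#s * (l ^ 2 * ‖y‖ ^ 2 / n)) := by gcongr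
    _ = Real.exp (-l * u + #s * (l ^ 2 * ‖y‖ ^ 2 / n)) := (Real.exp_add _ _).symm

lemma measureReal_le_abs_sum_inner_le (hindep : iIndepFun S μ)
    (hS : ∀ k, IsSimpleWalkStep μ (S k)) (s : Finset ι) (y : EuclideanSpace ℝ (Fin n)) {l : ℝ}
    (hl : 0 ≤ l) (hly : l * ‖y‖ ≤ 1) (u : ℝ) :
    μ.real {ω | u ≤ |∑ k ∈ s, ⟪S k ω, y⟫|} ≤
      2 * Real.exp (-l * u + #s * (l ^ 2 * ‖y‖ ^ 2 / n)) := by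
  have hsub : {ω | u ≤ |∑ k ∈ s, ⟪S k ω, y⟫|} ⊆
      {ω | u ≤ ∑ k ∈ s, ⟪S k ω, y⟫} ∪ {ω | u ≤ ∑ k ∈ s, ⟪S k ω, -y⟫} := fun ω hω => by
    simpa [inner_neg_right, le_abs] using hω
  have hpos := measureReal_le_sum_inner_le hindep hS s y hl hly u
  have hneg := measureReal_le_sum_inner_le hindep hS s (-y) hl (by rwa [norm_neg]) u
  rw [norm_neg] at hneg
  linarith [measureReal_mono (μ := μ) hsub, measureReal_union_le (μ := μ)
    {ω | u ≤ ∑ k ∈ s, ⟪S k ω, y⟫} {ω | u ≤ ∑ k ∈ s, ⟪S k ω, -y⟫}]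

lemma measureReal_le_abs_sum_inner_le_of_mul_le (hindep : iIndepFun S μ)
    (hS : ∀ k, IsSimpleWalkStep μ (S k)) (s : Finset ι) {y : EuclideanSpace ℝ (Fin n)}
    (hy : ‖y‖ = 1) {u : ℝ} (hu : 0 ≤ u) (hus : u * n ≤ 2 * #s) :
    μ.real {ω | u ≤ |∑ k ∈ s, ⟪S k ω, y⟫|} ≤ 2 * Real.exp (-(n * u ^ 2) / (4 * #s)) := by
  rcases (Nat.cast_nonneg (α := ℝ) #s).eq_or_lt with hs | hs
  · rw [← hs, mul_zero, div_zero, Real.exp_zero]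
    linarith [measureReal_le_one (μ := μ) (s := {ω | u ≤ |∑ k ∈ s, ⟪S k ω, y⟫|})]
  have hl : u * n / (2 * #s) * ‖y‖ ≤ 1 := by
    rwa [hy, mul_one, div_le_one (by positivity)]
  have key := measureReal_le_abs_sum_inner_le hindep hS s y (by positivity) hl u
  have hn : (n : ℝ) ≠ 0 := Nat.cast_ne_zero.2 (EuclideanSpace.pos_of_norm_eq_one hy).ne'
  convert key using 3
  rw [hy]
  field_simp
  ring

lemma measureReal_le_abs_sum_inner_le_of_pow_four_le (hindep : iIndepFun S μ)
    (hS : ∀ k, IsSimpleWalkStep μ (S k)) {s : Finset ι} (hs : n ^ 4 ≤ #s)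
    {y : EuclideanSpace ℝ (Fin n)} (hy : ‖y‖ = 1) {u : ℝ} (hu : 0 ≤ u) :
    μ.real {ω | u ≤ |∑ k ∈ s, ⟪S k ω, y⟫|} ≤
      Real.exp (-2 * (#s * n : ℝ) ^ ((1 : ℝ) / 4)) + 2 * Real.exp (-(n * u ^ 2) / (4 * #s)) := by
  have hn0 : (0 : ℝ) < n := by exact_mod_cast EuclideanSpace.pos_of_norm_eq_one hy
  have hexp_nonneg := Real.exp_nonneg (-2 * (#s * n : ℝ) ^ ((1 : ℝ) / 4))
  rcases le_or_gt (u * n) (2 * #s) with hsmall | hlarge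
  · linarith [measureReal_le_abs_sum_inner_le_of_mul_le hindep hS s hy hu hsmall]
  rcases le_or_gt u #s with hmid | hbig
  · have hn3 : 3 ≤ n := by
      by_contra! h
      have : (n : ℝ) ≤ 2 := by exact_mod_cast Nat.le_of_lt_succ h
      nlinarith
    have key := measureReal_le_abs_sum_inner_le hindep hS s y zero_le_one (by rw [hy, one_mul]) u
    have hexp : -1 * u + #s * (1 ^ 2 * ‖y‖ ^ 2 / n) ≤ -(#s / n) := by
      have : 2 * (#s / n : ℝ) < u := by rwa [← mul_div_assoc, div_lt_iff₀ hn0]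
      rw [hy, one_pow, mul_one, one_div, ← div_eq_mul_inv]
      linarith
    linarith [Real.two_mul_exp_neg_div_le (m := #s) (n := n) (by exact_mod_cast hn3)
      (by exact_mod_cast hs), Real.exp_le_exp.2 hexp, Real.exp_nonneg (-(n * u ^ 2) / (4 * #s))]
  · have hempty : {ω | u ≤ |∑ k ∈ s, ⟪S k ω, y⟫|} = ∅ :=
      Set.eq_empty_of_forall_notMem fun ω hω =>
        hbig.not_ge (hω.trans (by simpa [hy] using abs_sum_inner_le hS s ω y))
    rw [hempty, measureReal_empty]
    positivity

end SimpleWalk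

theorem walk_on_Zn_isotropic_and_concentrated_general
    {Ω : Type} [MeasurableSpace Ω] (μ : Measure Ω) [IsProbabilityMeasure μ]
    (n m : ℕ) (hm : n ^ 4 ≤ m)
    (S : ℕ → Ω → EuclideanSpace ℝ (Fin n))
    (hmeas : ∀ k, Measurable (S k))
    (hindep : iIndepFun S μ)
    (hvals : ∀ k ω, ∃ i : Fin n,
      S k ω = EuclideanSpace.single i 1 ∨ S k ω = -EuclideanSpace.single i 1)
    (hunif : ∀ k (i : Fin n),
      μ {ω | S k ω = EuclideanSpace.single i 1} = 1 / (2 * n) ∧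
      μ {ω | S k ω = -EuclideanSpace.single i 1} = 1 / (2 * n)) :
    (∫ ω, (Real.sqrt ((n : ℝ) / m) • ∑ k ∈ Finset.range m, S k ω) ∂μ) = 0 ∧
    (∀ y z : EuclideanSpace ℝ (Fin n),
      (∫ ω, (@inner ℝ (EuclideanSpace ℝ (Fin n)) _
            (Real.sqrt ((n : ℝ) / m) • ∑ k ∈ Finset.range m, S k ω) y) *
          (@inner ℝ (EuclideanSpace ℝ (Fin n)) _
            (Real.sqrt ((n : ℝ) / m) • ∑ k ∈ Finset.range m, S k ω) z) ∂μ) =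
        @inner ℝ (EuclideanSpace ℝ (Fin n)) _ y z) ∧
    (∀ y : EuclideanSpace ℝ (Fin n), ‖y‖ = 1 → ∀ t : ℝ, 0 < t →
      μ {ω | t ≤ |@inner ℝ (EuclideanSpace ℝ (Fin n)) _
            (Real.sqrt ((n : ℝ) / m) • ∑ k ∈ Finset.range m, S k ω) y|} ≤
        ENNReal.ofReal (Real.exp (-2 * ((m : ℝ) * n) ^ ((1 : ℝ) / 4)) +
          2 * Real.exp (-t ^ 2 / 4))) := by
  have hS (k : ℕ) : IsSimpleWalkStep μ (S k) := ⟨hmeas k, hvals k, hunif k⟩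
  have hn : (0 : ℝ) < n := by exact_mod_cast (hS 0).pos_dim
  have hm0 : (0 : ℝ) < m := by exact_mod_cast (pow_pos (hS 0).pos_dim 4).trans_le hm
  set c := Real.sqrt ((n : ℝ) / m)
  have hc : 0 < c := Real.sqrt_pos.2 (by positivity)
  have hc2 : c ^ 2 = n / m := Real.sq_sqrt (by positivity)
  have hX (ω : Ω) (y : EuclideanSpace ℝ (Fin n)) :
      ⟪c • ∑ k ∈ Finset.range m, S k ω, y⟫ = c * ∑ k ∈ Finset.range m, ⟪S k ω, y⟫ := by
    rw [real_inner_smul_left, sum_inner]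
  refine ⟨?_, fun y z => ?_, fun y hy t ht => ?_⟩
  · rw [integral_smul, integral_finsetSum _ fun k _ => (hS k).integrable_comp fun v => v]
    simp [(hS _).integral_eq_zero]
  · simp_rw [hX, mul_mul_mul_comm c, integral_const_mul,
      integral_sum_inner_mul_sum_inner hindep hS, ← sq, hc2, Finset.card_range]
    field_simp
  · have hset : {ω | t ≤ |⟪c • ∑ k ∈ Finset.range m, S k ω, y⟫|} =
        {ω | t / c ≤ |∑ k ∈ Finset.range m, ⟪S k ω, y⟫|} := by
      simp_rw [hX, abs_mul, abs_of_pos hc, div_le_iff₀' hc]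
    have htail := measureReal_le_abs_sum_inner_le_of_pow_four_le hindep hS
      (s := Finset.range m) (by rwa [Finset.card_range]) hy (div_pos ht hc).le
    rw [Finset.card_range, div_pow, hc2] at htail
    rw [hset, ← ofReal_measureReal]
    refine ENNReal.ofReal_le_ofReal (htail.trans_eq ?_)
    congr 3
    field_simp

theorem walk_on_Zn_isotropic_and_concentrated
    {Ω : Type} [MeasurableSpace Ω] (μ : Measure Ω) [IsProbabilityMeasure μ]
    (n m : ℕ) (hn : 0 < n) (hm : n ^ 4 ≤ m)
    (S : ℕ → Ω → EuclideanSpace ℝ (Fin n))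
    (hmeas : ∀ k, Measurable (S k))
    (hindep : iIndepFun S μ)
    (hvals : ∀ k ω, ∃ i : Fin n,
      S k ω = EuclideanSpace.single i 1 ∨ S k ω = -EuclideanSpace.single i 1)
    (hunif : ∀ k (i : Fin n),
      μ {ω | S k ω = EuclideanSpace.single i 1} = 1 / (2 * n) ∧
      μ {ω | S k ω = -EuclideanSpace.single i 1} = 1 / (2 * n)) :
    (∫ ω, (Real.sqrt ((n : ℝ) / m) • ∑ k ∈ Finset.range m, S k ω) ∂μ) = 0 ∧
    (∀ y z : EuclideanSpace ℝ (Fin n),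
      (∫ ω, (@inner ℝ (EuclideanSpace ℝ (Fin n)) _
            (Real.sqrt ((n : ℝ) / m) • ∑ k ∈ Finset.range m, S k ω) y) *
          (@inner ℝ (EuclideanSpace ℝ (Fin n)) _
            (Real.sqrt ((n : ℝ) / m) • ∑ k ∈ Finset.range m, S k ω) z) ∂μ) =
        @inner ℝ (EuclideanSpace ℝ (Fin n)) _ y z) ∧
    (∀ y : EuclideanSpace ℝ (Fin n), ‖y‖ = 1 → ∀ t : ℝ, 0 < t →
      μ {ω | t ≤ |@inner ℝ (EuclideanSpace ℝ (Fin n)) _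
            (Real.sqrt ((n : ℝ) / m) • ∑ k ∈ Finset.range m, S k ω) y|} ≤
        ENNReal.ofReal (Real.exp (-2 * ((m : ℝ) * n) ^ ((1 : ℝ) / 4)) +
          2 * Real.exp (-t ^ 2 / 4))) :=
  walk_on_Zn_isotropic_and_concentrated_general μ n m hm S hmeas hindep hvals hunif
end
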